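/- arXiv:2501.06495 — 5 statements merged into one kernel-verified Lean document; each statement's English description precedes it below -/
import Mathlib

section
/- Let a, s ∈ ℂ with Re(a) > 0 and Re(s) > 0. Then the function F(t) = (1/Γ(s)) · ∫₀^∞ ζ^{s−1}·e^{−aζ}/(1 − t·e^{−ζ}) dζ is well defined and holomorphic on the open set ℂ \ [1,∞), and F(t) = Σ_{n≥0} tⁿ/(n+a)^s for all |t| < 1. In other words, the Hurwitz–Lerch series Σ_{n≥0} tⁿ/(n+a)^s extends analytically from the unit disc to ℂ \ [1,∞). -/
open Complex MeasureTheory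

noncomputable section

/-- The open sector `S_θ(α) = {ρ e^{iφ} : ρ > 0, |φ - θ| < α/2}`. -/
def Sector (θ α : ℝ) : Set ℂ :=
  {z : ℂ | ∃ ρ φ : ℝ, 0 < ρ ∧ |φ - θ| < α / 2 ∧
    z = (ρ : ℂ) * Complex.exp ((φ : ℂ) * Complex.I)}

/-- The disc-sector `Ŝ_θ(α, r) = S_θ(α) ∪ D_r`. -/
def DiscSector (θ α r : ℝ) : Set ℂ := Sector θ α ∪ Metric.ball 0 r

/-- `θ ≢ 0 (mod 2π)`. -/
def NonzeroDir (θ : ℝ) : Prop := ¬ ∃ j : ℤ, θ = 2 * Real.pi * (j : ℝ)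

/-- The ray `L_θ = {ρ e^{iθ} : ρ > 0}`. -/
def Ray (θ : ℝ) : Set ℂ :=
  {z : ℂ | ∃ ρ : ℝ, 0 < ρ ∧ z = (ρ : ℂ) * Complex.exp ((θ : ℂ) * Complex.I)}

/-- The half-line `[c, ∞) ⊆ ℂ`. -/
def SlitGe (c : ℝ) : Set ℂ := {z : ℂ | z.im = 0 ∧ c ≤ z.re}

open scoped Classical in
/-- `C(θ) = |sin θ|` if `θ ≡ φ (mod 2π)` for some `φ ∈ (-π/2, π/2) \ {0}`, and `1` otherwise. -/
def Cdir (θ : ℝ) : ℝ :=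
  if ∃ φ : ℝ, φ ∈ Set.Ioo (-(Real.pi / 2)) (Real.pi / 2) ∧ φ ≠ 0 ∧
      ∃ j : ℤ, θ = φ + 2 * Real.pi * (j : ℝ)
  then |Real.sin θ| else 1

/-- A sequence `m : ℕ → (0,∞)` preserves summability: both `Σ tⁿ/m(n)` and `Σ m(n)tⁿ` have
positive radius of convergence, and for every `k > 0` and every direction `θ ≢ 0 (mod 2π)`
their sums extend holomorphically to a disc-sector in direction `θ` with exponential growth
of order at most `k` there. -/
def PreservesSummability (m : ℕ → ℝ) : Prop :=
  (∃ R : ℝ, 0 < R ∧ ∀ t : ℂ, ‖t‖ < R → Summable (fun n : ℕ => t ^ n / (m n : ℂ))) ∧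
  (∃ R : ℝ, 0 < R ∧ ∀ t : ℂ, ‖t‖ < R → Summable (fun n : ℕ => (m n : ℂ) * t ^ n)) ∧
  ∀ k : ℝ, 0 < k → ∀ θ : ℝ, NonzeroDir θ →
    ∃ α : ℝ, 0 < α ∧ ∃ r : ℝ, 0 < r ∧ ∃ U : Set ℂ, IsOpen U ∧ DiscSector θ α r ⊆ U ∧
      ∃ F G : ℂ → ℂ, DifferentiableOn ℂ F U ∧ DifferentiableOn ℂ G U ∧
        (∃ ε : ℝ, 0 < ε ∧ ∀ t : ℂ, ‖t‖ < ε →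
          F t = ∑' n : ℕ, t ^ n / (m n : ℂ) ∧ G t = ∑' n : ℕ, (m n : ℂ) * t ^ n) ∧
        ∃ A B : ℝ, 0 < A ∧ 0 < B ∧ ∀ t ∈ DiscSector θ α r,
          ‖F t‖ ≤ A * Real.exp (B * ‖t‖ ^ k) ∧
          ‖G t‖ ≤ A * Real.exp (B * ‖t‖ ^ k)

/-- A sequence `m : ℕ → (0,∞)` preserves `q`-Gevrey asymptotic expansions: both `Σ tⁿ/m(n)`
and `Σ m(n)tⁿ` have positive radius of convergence and, for every `s > 0` and every direction
`θ ≢ 0 (mod 2π)`, their sums extend holomorphically to an infinite sector in direction `θ`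
with `q`-exponential growth of order `1/s` there. -/
def PreservesQGevrey (q : ℝ) (m : ℕ → ℝ) : Prop :=
  (∃ R : ℝ, 0 < R ∧ ∀ t : ℂ, ‖t‖ < R → Summable (fun n : ℕ => t ^ n / (m n : ℂ))) ∧
  (∃ R : ℝ, 0 < R ∧ ∀ t : ℂ, ‖t‖ < R → Summable (fun n : ℕ => (m n : ℂ) * t ^ n)) ∧
  ∀ s : ℝ, 0 < s → ∀ θ : ℝ, NonzeroDir θ →
    ∃ α : ℝ, 0 < α ∧ ∃ U : Set ℂ, IsOpen U ∧ Sector θ α ⊆ U ∧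
      ∃ F G : ℂ → ℂ, DifferentiableOn ℂ F U ∧ DifferentiableOn ℂ G U ∧
        (∃ ε : ℝ, 0 < ε ∧ Metric.ball 0 ε ⊆ U ∧ ∀ t : ℂ, ‖t‖ < ε →
          F t = ∑' n : ℕ, t ^ n / (m n : ℂ) ∧ G t = ∑' n : ℕ, (m n : ℂ) * t ^ n) ∧
        ∃ C h : ℝ, 0 < C ∧ 0 < h ∧ ∃ β : ℝ, ∀ t ∈ Sector θ α,
          ‖F t‖ ≤
            C * Real.exp ((Real.log (‖t‖ + h)) ^ 2 / (2 * s * Real.log q)) * (‖t‖ + h) ^ β ∧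
          ‖G t‖ ≤
            C * Real.exp ((Real.log (‖t‖ + h)) ^ 2 / (2 * s * Real.log q)) * (‖t‖ + h) ^ β

/-- The analytic continuation of the Hurwitz–Lerch transcendent given by the integral
representation `Φ(t,s,a) = Γ(s)⁻¹ ∫₀^∞ ζ^{s-1} e^{-aζ}/(1 - t e^{-ζ}) dζ`. -/
def lerchF (a s : ℂ) (t : ℂ) : ℂ :=
  (Complex.Gamma s)⁻¹ *
    ∫ ζ in Set.Ioi (0 : ℝ),
      (ζ : ℂ) ^ (s - 1) * Complex.exp (-a * (ζ : ℂ)) / (1 - t * Complex.exp (-(ζ : ℂ)))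

namespace HLaux
open Set Real Filter Metric
open scoped Topology

lemma isClosed_slitGe (c : ℝ) : IsClosed (SlitGe c) := by
  have : SlitGe c = (fun z : ℂ => z.im) ⁻¹' {0} ∩ (fun z : ℂ => z.re) ⁻¹' (Ici c) := by
    ext z
    simp only [SlitGe, Set.mem_setOf_eq, Set.mem_inter_iff, Set.mem_preimage,
      Set.mem_singleton_iff, Set.mem_Ici]
  rw [this]
  exact ((isClosed_singleton).preimage Complex.continuous_im).inter
    ((isClosed_Ici).preimage Complex.continuous_re)

lemma denom_bound {t₀ : ℂ} (ht₀ : t₀ ∈ (SlitGe 1)ᶜ) :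
    ∃ ε > (0:ℝ), ∃ c > (0:ℝ), Metric.closedBall t₀ ε ⊆ (SlitGe 1)ᶜ ∧
      ∀ t ∈ Metric.closedBall t₀ ε, ∀ x ∈ Icc (0:ℝ) 1, c ≤ ‖1 - t * x‖ := by
  have hop : IsOpen (SlitGe 1)ᶜ := (isClosed_slitGe 1).isOpen_compl
  obtain ⟨δ, hδ, hball⟩ := Metric.isOpen_iff.1 hop t₀ ht₀
  have hsub : Metric.closedBall t₀ (δ/2) ⊆ (SlitGe 1)ᶜ :=
    (Metric.closedBall_subset_ball (by linarith)).trans hball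
  have hK : IsCompact (Metric.closedBall t₀ (δ/2) ×ˢ Icc (0:ℝ) 1) :=
    (isCompact_closedBall _ _).prod isCompact_Icc
  have hcont : ContinuousOn (fun p : ℂ × ℝ => ‖1 - p.1 * (p.2 : ℂ)‖)
      (Metric.closedBall t₀ (δ/2) ×ˢ Icc (0:ℝ) 1) :=
    (continuous_norm.comp (continuous_const.sub (continuous_fst.mul
      (Complex.continuous_ofReal.comp continuous_snd)))).continuousOn
  have hne : (Metric.closedBall t₀ (δ/2) ×ˢ Icc (0:ℝ) 1).Nonempty :=
    ⟨(t₀, 0), Set.mk_mem_prod (Metric.mem_closedBall_self (by linarith)) ⟨le_refl _, zero_le_one⟩⟩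
  obtain ⟨⟨t₁, x₁⟩, hmem, hmin⟩ := hK.exists_isMinOn hne hcont
  refine ⟨δ/2, by linarith, ‖1 - t₁ * (x₁ : ℂ)‖, ?_, hsub,
    fun t ht x hx => isMinOn_iff.1 hmin (t, x) (Set.mk_mem_prod ht hx)⟩
  rcases (norm_nonneg (1 - t₁ * (x₁ : ℂ))).lt_or_eq with h | h
  · exact h
  exfalso
  have hz : (1 : ℂ) - t₁ * (x₁ : ℂ) = 0 := norm_eq_zero.1 h.symm
  have hx₁ : x₁ ∈ Icc (0:ℝ) 1 := hmem.2
  have hx₁0 : x₁ ≠ 0 := by rintro rfl; simp at hz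
  have hx₁pos : 0 < x₁ := lt_of_le_of_ne hx₁.1 (Ne.symm hx₁0)
  have hmul : t₁ * (x₁ : ℂ) = 1 := by linear_combination -hz
  have hx : (x₁ : ℂ) ≠ 0 := by exact_mod_cast hx₁0
  have ht₁ : t₁ = ((x₁⁻¹ : ℝ) : ℂ) := by
    rw [Complex.ofReal_inv]
    exact eq_inv_of_mul_eq_one_left hmul
  have : t₁ ∈ SlitGe 1 := by
    refine ⟨by rw [ht₁]; simp, ?_⟩
    rw [ht₁]
    simpa using (one_le_inv_iff₀.2 ⟨hx₁pos, hx₁.2⟩ : (1:ℝ) ≤ x₁⁻¹)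
  exact hsub hmem.1 this

lemma integrable_bound {σ b : ℝ} (hσ : 0 < σ) (hb : 0 < b) :
    IntegrableOn (fun x : ℝ => x ^ (σ - 1) * Real.exp (-b * x)) (Ioi 0) := by
  have h := Real.GammaIntegral_convergent hσ
  rw [← mul_zero b, ← integrableOn_Ioi_comp_mul_left_iff _ _ hb] at h
  refine IntegrableOn.congr_fun (h.const_mul (b ^ (1 - σ))) (fun x hx => ?_) measurableSet_Ioi
  have hx0 : (0:ℝ) < x := hx
  have h1 : (b * x) ^ (σ - 1) = b ^ (σ - 1) * x ^ (σ - 1) := Real.mul_rpow hb.le hx0.le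
  rw [h1, show -(b * x) = -b * x by ring]
  have h2 : b ^ (1 - σ) * b ^ (σ - 1) = 1 := by
    rw [← Real.rpow_add hb]; norm_num
  linear_combination (Real.exp (-b*x) * x ^ (σ-1)) * h2

lemma contOn_num (a s : ℂ) : ContinuousOn
    (fun x : ℝ => (x:ℂ) ^ (s - 1) * Complex.exp (-a * (x:ℂ))) (Ioi 0) := by
  apply ContinuousOn.mul
  · intro x hx
    exact ((continuousAt_cpow_const (Complex.ofReal_mem_slitPlane.2 hx)).comp
      Complex.continuous_ofReal.continuousAt).continuousWithinAt
  · exact (Complex.continuous_exp.comp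
      ((continuous_const.mul Complex.continuous_ofReal))).continuousOn

lemma norm_num_eq (a s : ℂ) {x : ℝ} (hx : 0 < x) :
    ‖(x:ℂ) ^ (s - 1) * Complex.exp (-a * (x:ℂ))‖ = x ^ (s.re - 1) * Real.exp (-a.re * x) := by
  rw [norm_mul,
    Complex.norm_cpow_eq_rpow_re_of_pos hx, Complex.norm_exp]
  simp [Complex.sub_re, Complex.neg_re, Complex.mul_re]

lemma integrable_cexp {s w : ℂ} (hs : 0 < s.re) (hw : 0 < w.re) :
    IntegrableOn (fun x : ℝ => (x:ℂ) ^ (s - 1) * Complex.exp (-w * (x:ℂ))) (Ioi 0) := by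
  refine Integrable.mono' (integrable_bound hs hw)
    ((contOn_num w s).aestronglyMeasurable measurableSet_Ioi) ?_
  filter_upwards [self_mem_ae_restrict (measurableSet_Ioi : MeasurableSet (Ioi (0:ℝ)))] with x hx
  rw [norm_num_eq w s hx]

lemma integral_cexp {s : ℂ} (hs : 0 < s.re) :
    ∀ w : ℂ, 0 < w.re →
    ∫ x in Ioi (0:ℝ), (x:ℂ) ^ (s - 1) * Complex.exp (-w * (x:ℂ)) =
      Complex.Gamma s * w ^ (-s) := by
  set U : Set ℂ := {z | 0 < z.re} with hU
  have hUo : IsOpen U := isOpen_lt continuous_const Complex.continuous_re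
  have hUc : IsPreconnected U := (convex_halfSpace_re_gt 0).isPreconnected
  set f : ℂ → ℂ := fun w => ∫ x in Ioi (0:ℝ), (x:ℂ) ^ (s - 1) * Complex.exp (-w * (x:ℂ))
    with hf_def
  set g : ℂ → ℂ := fun w => Complex.Gamma s * w ^ (-s) with hg_def
  have hf : DifferentiableOn ℂ f U := by
    intro w₀ hw₀
    have hw₀re : 0 < w₀.re := hw₀
    have hε : 0 < w₀.re / 2 := half_pos hw₀re
    have hbound : ∀ᵐ (x:ℝ) ∂(volume.restrict (Ioi 0)), ∀ w ∈ Metric.ball w₀ (w₀.re/2),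
        ‖(x:ℂ) ^ (s - 1) * Complex.exp (-w * (x:ℂ)) * (-(x:ℂ))‖
          ≤ x ^ ((s.re + 1) - 1) * Real.exp (-(w₀.re/2) * x) := by
      filter_upwards [self_mem_ae_restrict (measurableSet_Ioi : MeasurableSet (Ioi (0:ℝ)))]
        with x hx w hw
      have hx0 : (0:ℝ) < x := hx
      have hwre : w₀.re / 2 ≤ w.re := by
        have := Complex.abs_re_le_norm (w - w₀)
        have h2 : ‖w - w₀‖ < w₀.re / 2 := by
          simpa [Complex.dist_eq] using (mem_ball.1 hw)
        have := abs_lt.1 (lt_of_le_of_lt this h2)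
        simp [Complex.sub_re] at this
        linarith [this.1]
      rw [norm_mul, norm_num_eq w s hx0]
      have : ‖(-(x:ℂ))‖ = x := by
        rw [norm_neg, Complex.norm_real, Real.norm_eq_abs, abs_of_pos hx0]
      rw [this]
      have hrw : x ^ (s.re - 1) * Real.exp (-w.re * x) * x
          = x ^ ((s.re + 1) - 1) * Real.exp (-w.re * x) := by
        rw [show (s.re + 1) - 1 = (s.re - 1) + 1 by ring, Real.rpow_add hx0, Real.rpow_one]
        ring
      rw [hrw]
      have : Real.exp (-w.re * x) ≤ Real.exp (-(w₀.re/2) * x) := by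
        apply Real.exp_le_exp.2; nlinarith
      have hxp : (0:ℝ) ≤ x ^ ((s.re + 1) - 1) := Real.rpow_nonneg hx0.le _
      nlinarith [Real.exp_pos (-w.re * x)]
    have hdiff : ∀ᵐ (x:ℝ) ∂(volume.restrict (Ioi 0)), ∀ w ∈ Metric.ball w₀ (w₀.re/2),
        HasDerivAt (fun w => (x:ℂ) ^ (s - 1) * Complex.exp (-w * (x:ℂ)))
          ((x:ℂ) ^ (s - 1) * Complex.exp (-w * (x:ℂ)) * (-(x:ℂ))) w := by
      filter_upwards [self_mem_ae_restrict (measurableSet_Ioi : MeasurableSet (Ioi (0:ℝ)))]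
        with x hx w hw
      have : HasDerivAt (fun w : ℂ => -w * (x:ℂ)) (-(x:ℂ)) w := by
        simpa using ((hasDerivAt_id w).neg.mul_const (x:ℂ))
      have h2 := (this.cexp).const_mul ((x:ℂ) ^ (s - 1))
      exact h2.congr_deriv (by ring)
    obtain ⟨-, hderiv⟩ := hasDerivAt_integral_of_dominated_loc_of_deriv_le
      (F := fun w (x:ℝ) => (x:ℂ) ^ (s - 1) * Complex.exp (-w * (x:ℂ)))
      (F' := fun w (x:ℝ) => (x:ℂ) ^ (s - 1) * Complex.exp (-w * (x:ℂ)) * (-(x:ℂ)))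
      (bound := fun x : ℝ => x ^ ((s.re + 1) - 1) * Real.exp (-(w₀.re/2) * x)) (Metric.ball_mem_nhds w₀ hε)
      (Eventually.of_forall fun w =>
        ((contOn_num w s).aestronglyMeasurable measurableSet_Ioi))
      (integrable_cexp hs hw₀re)
      (((contOn_num w₀ s).mul
        (Complex.continuous_ofReal.neg.continuousOn)).aestronglyMeasurable measurableSet_Ioi)
      hbound (integrable_bound (by linarith) hε) hdiff
    exact hderiv.differentiableAt.differentiableWithinAt
  have hg : DifferentiableOn ℂ g U := by
    intro w hw
    have hw' : w ∈ Complex.slitPlane := Complex.mem_slitPlane_iff.2 (Or.inl hw)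
    exact (((hasDerivAt_id w).cpow_const hw').const_mul
      (Complex.Gamma s)).differentiableAt.differentiableWithinAt
  have key : ∀ r : ℝ, 0 < r → f r = g r := by
    intro r hr
    have h1 := integral_cpow_mul_exp_neg_mul_Ioi hs hr
    have h2 : f r = (1 / (r:ℂ)) ^ s * Complex.Gamma s := by
      rw [hf_def, ← h1]
      refine setIntegral_congr_fun measurableSet_Ioi (fun x hx => ?_)
      rw [neg_mul]
    rw [h2, hg_def]
    have h3 : (1 / (r:ℂ)) ^ s = (r:ℂ) ^ (-s) := by
      rw [one_div, Complex.inv_cpow _ _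
        (by rw [Complex.arg_ofReal_of_nonneg hr.le]; exact Real.pi_ne_zero.symm),
        ← Complex.cpow_neg]
    rw [h3]; ring
  have hfreq : ∃ᶠ z in nhdsWithin (1:ℂ) {(1:ℂ)}ᶜ, f z = g z := by
    have h0 : Tendsto (fun n : ℕ => (1 + ((n:ℝ)+1)⁻¹)) atTop (𝓝 1) := by
      have := tendsto_one_div_add_atTop_nhds_zero_nat (𝕜 := ℝ)
      simpa [one_div] using tendsto_const_nhds.add this
    have h1 : Tendsto (fun n : ℕ => (((1 + ((n:ℝ)+1)⁻¹ : ℝ)) : ℂ)) atTop (𝓝 (1:ℂ)) := by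
      have h := (Complex.continuous_ofReal.tendsto 1).comp h0
      rw [show ((1:ℝ):ℂ) = (1:ℂ) by norm_num] at h
      exact h
    have h2 : Tendsto (fun n : ℕ => (((1 + ((n:ℝ)+1)⁻¹ : ℝ)) : ℂ)) atTop (𝓝[≠] (1:ℂ)) := by
      refine tendsto_nhdsWithin_iff.2 ⟨h1, Eventually.of_forall fun n => ?_⟩
      simp only [Set.mem_compl_iff, Set.mem_singleton_iff]
      intro hcon
      rw [show (1:ℂ) = ((1:ℝ):ℂ) by norm_num] at hcon
      have := Complex.ofReal_inj.1 hcon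
      have hp : (0:ℝ) < ((n:ℝ)+1)⁻¹ := by positivity
      linarith
    exact h2.frequently ((Eventually.of_forall (fun n => key _ (by positivity))).frequently)
  have heq : EqOn f g U :=
    (hf.analyticOnNhd hUo).eqOn_of_preconnected_of_frequently_eq (hg.analyticOnNhd hUo) hUc
      (show (1:ℂ) ∈ U by simp [hU]) hfreq
  exact fun w hw => heq hw

lemma denom_lb {t : ℂ} {c : ℝ}
    (h : ∀ x' ∈ Icc (0:ℝ) 1, c ≤ ‖1 - t * (x' : ℂ)‖) {x : ℝ} (hx : 0 < x) :
    c ≤ ‖1 - t * Complex.exp (-(x:ℂ))‖ := by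
  have hmem : Real.exp (-x) ∈ Icc (0:ℝ) 1 :=
    ⟨(Real.exp_pos _).le, Real.exp_le_one_iff.2 (by linarith)⟩
  have := h _ hmem
  rwa [Complex.ofReal_exp, Complex.ofReal_neg] at this

lemma denom_ne {t : ℂ} {c : ℝ} (hc : 0 < c)
    (h : ∀ x' ∈ Icc (0:ℝ) 1, c ≤ ‖1 - t * (x' : ℂ)‖) {x : ℝ} (hx : 0 < x) :
    (1 : ℂ) - t * Complex.exp (-(x:ℂ)) ≠ 0 := by
  intro hz
  have := denom_lb h hx
  rw [hz] at this
  simp at this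
  linarith

lemma contOn_integrand (a s t : ℂ) {c : ℝ} (hc : 0 < c)
    (h : ∀ x' ∈ Icc (0:ℝ) 1, c ≤ ‖1 - t * (x' : ℂ)‖) :
    ContinuousOn (fun x : ℝ =>
      (x:ℂ) ^ (s - 1) * Complex.exp (-a * (x:ℂ)) / (1 - t * Complex.exp (-(x:ℂ)))) (Ioi 0) := by
  refine (contOn_num a s).div ?_ (fun x hx => denom_ne hc h hx)
  exact (continuous_const.sub (continuous_const.mul
    (Complex.continuous_exp.comp Complex.continuous_ofReal.neg))).continuousOn

lemma integrand_integrable (a s t : ℂ) (ha : 0 < a.re) (hs : 0 < s.re) {c : ℝ} (hc : 0 < c)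
    (h : ∀ x' ∈ Icc (0:ℝ) 1, c ≤ ‖1 - t * (x' : ℂ)‖) :
    IntegrableOn (fun x : ℝ =>
      (x:ℂ) ^ (s - 1) * Complex.exp (-a * (x:ℂ)) / (1 - t * Complex.exp (-(x:ℂ)))) (Ioi 0) := by
  refine Integrable.mono' ((integrable_bound hs ha).const_mul c⁻¹)
    ((contOn_integrand a s t hc h).aestronglyMeasurable measurableSet_Ioi) ?_
  filter_upwards [self_mem_ae_restrict (measurableSet_Ioi : MeasurableSet (Ioi (0:ℝ)))] with x hx
  have hx0 : (0:ℝ) < x := hx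
  rw [norm_div, norm_num_eq a s hx0]
  have hle := denom_lb h hx0
  have hnn : (0:ℝ) ≤ x ^ (s.re - 1) * Real.exp (-a.re * x) := by positivity
  calc x ^ (s.re - 1) * Real.exp (-a.re * x) / ‖1 - t * Complex.exp (-(x:ℂ))‖
      ≤ x ^ (s.re - 1) * Real.exp (-a.re * x) / c :=
        div_le_div_of_nonneg_left hnn hc hle
    _ = c⁻¹ * (x ^ (s.re - 1) * Real.exp (-a.re * x)) := by rw [div_eq_inv_mul]

end HLaux

open scoped Topology

set_option maxHeartbeats 2000000 in
/-- For `Re a > 0` and `Re s > 0`, the integral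
`F(t) = Γ(s)⁻¹ ∫₀^∞ ζ^{s-1} e^{-aζ}/(1 - t e^{-ζ}) dζ` is well defined and holomorphic on
`ℂ \ [1,∞)` and agrees with the Hurwitz–Lerch series `Σ tⁿ/(n+a)^s` on the unit disc. -/
theorem hurwitz_lerch_analytic_continuation (a s : ℂ) (ha : 0 < a.re) (hs : 0 < s.re) :
    (∀ t ∈ (SlitGe 1)ᶜ, MeasureTheory.IntegrableOn
      (fun ζ : ℝ =>
        (ζ : ℂ) ^ (s - 1) * Complex.exp (-a * (ζ : ℂ)) / (1 - t * Complex.exp (-(ζ : ℂ))))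
      (Set.Ioi 0)) ∧
    DifferentiableOn ℂ (lerchF a s) (SlitGe 1)ᶜ ∧
    ∀ t : ℂ, ‖t‖ < 1 →
      Summable (fun n : ℕ => t ^ n / ((n : ℂ) + a) ^ s) ∧
      lerchF a s t = ∑' n : ℕ, t ^ n / ((n : ℂ) + a) ^ s := by
  have hΓ : Complex.Gamma s ≠ 0 := Complex.Gamma_ne_zero_of_re_pos hs
  have part1 : ∀ t ∈ (SlitGe 1)ᶜ, MeasureTheory.IntegrableOn
      (fun ζ : ℝ =>
        (ζ : ℂ) ^ (s - 1) * Complex.exp (-a * (ζ : ℂ)) / (1 - t * Complex.exp (-(ζ : ℂ))))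
      (Set.Ioi 0) := by
    intro t ht
    obtain ⟨ε, hε, c, hc, hsub, hb⟩ := HLaux.denom_bound ht
    exact HLaux.integrand_integrable a s t ha hs hc
      (fun x hx => hb t (Metric.mem_closedBall_self hε.le) x hx)
  refine ⟨part1, ?_, ?_⟩
  · -- holomorphy
    intro t₀ ht₀
    obtain ⟨ε, hε, c, hc, hsub, hb⟩ := HLaux.denom_bound ht₀
    have hball : ∀ t ∈ Metric.ball t₀ ε, ∀ x' ∈ Set.Icc (0:ℝ) 1,
        c ≤ ‖1 - t * (x' : ℂ)‖ :=
      fun t ht => hb t (Metric.ball_subset_closedBall ht)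
    have hbt₀ : ∀ x' ∈ Set.Icc (0:ℝ) 1, c ≤ ‖1 - t₀ * (x' : ℂ)‖ :=
      hb t₀ (Metric.mem_closedBall_self hε.le)
    have hbound : ∀ᵐ (x:ℝ) ∂(volume.restrict (Set.Ioi 0)), ∀ t ∈ Metric.ball t₀ ε,
        ‖(x:ℂ) ^ (s - 1) * Complex.exp (-a * (x:ℂ)) * Complex.exp (-(x:ℂ)) /
          (1 - t * Complex.exp (-(x:ℂ))) ^ 2‖
          ≤ c⁻¹ * (c⁻¹ * (x ^ (s.re - 1) * Real.exp (-a.re * x))) := by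
      filter_upwards [self_mem_ae_restrict (measurableSet_Ioi : MeasurableSet (Set.Ioi (0:ℝ)))]
        with x hx t ht
      have hx0 : (0:ℝ) < x := hx
      rw [norm_div, norm_mul, HLaux.norm_num_eq a s hx0, norm_pow]
      have hE : ‖Complex.exp (-(x:ℂ))‖ = Real.exp (-x) := by
        rw [Complex.norm_exp]
        simp
      have hE1 : ‖Complex.exp (-(x:ℂ))‖ ≤ 1 := by
        rw [hE]; exact Real.exp_le_one_iff.2 (by linarith)
      have hD : c ≤ ‖1 - t * Complex.exp (-(x:ℂ))‖ := HLaux.denom_lb (hball t ht) hx0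
      have hNnn : (0:ℝ) ≤ x ^ (s.re - 1) * Real.exp (-a.re * x) := by positivity
      have h1 : x ^ (s.re - 1) * Real.exp (-a.re * x) * ‖Complex.exp (-(x:ℂ))‖
          ≤ x ^ (s.re - 1) * Real.exp (-a.re * x) := mul_le_of_le_one_right hNnn hE1
      have h2 : c * c ≤ ‖1 - t * Complex.exp (-(x:ℂ))‖ ^ 2 := by nlinarith
      calc x ^ (s.re - 1) * Real.exp (-a.re * x) * ‖Complex.exp (-(x:ℂ))‖ /
            ‖1 - t * Complex.exp (-(x:ℂ))‖ ^ 2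
          ≤ (x ^ (s.re - 1) * Real.exp (-a.re * x)) / (c * c) := by
            apply div_le_div₀ hNnn h1 (by positivity) h2
        _ = c⁻¹ * (c⁻¹ * (x ^ (s.re - 1) * Real.exp (-a.re * x))) := by
            rw [div_eq_inv_mul, mul_inv, mul_assoc]
    have hdiff : ∀ᵐ (x:ℝ) ∂(volume.restrict (Set.Ioi 0)), ∀ t ∈ Metric.ball t₀ ε,
        HasDerivAt (fun t : ℂ => (x:ℂ) ^ (s - 1) * Complex.exp (-a * (x:ℂ)) /
            (1 - t * Complex.exp (-(x:ℂ))))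
          ((x:ℂ) ^ (s - 1) * Complex.exp (-a * (x:ℂ)) * Complex.exp (-(x:ℂ)) /
            (1 - t * Complex.exp (-(x:ℂ))) ^ 2) t := by
      filter_upwards [self_mem_ae_restrict (measurableSet_Ioi : MeasurableSet (Set.Ioi (0:ℝ)))]
        with x hx t ht
      have hx0 : (0:ℝ) < x := hx
      have hden : (1:ℂ) - t * Complex.exp (-(x:ℂ)) ≠ 0 := HLaux.denom_ne hc (hball t ht) hx0
      have h0 : HasDerivAt (fun t : ℂ => 1 - t * Complex.exp (-(x:ℂ)))
          (-(Complex.exp (-(x:ℂ)))) t := by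
        simpa using ((hasDerivAt_id t).mul_const (Complex.exp (-(x:ℂ)))).const_sub 1
      have h1 := h0.inv hden
      have h2 := h1.const_mul ((x:ℂ) ^ (s - 1) * Complex.exp (-a * (x:ℂ)))
      have heq : (fun t : ℂ => (x:ℂ) ^ (s - 1) * Complex.exp (-a * (x:ℂ)) /
          (1 - t * Complex.exp (-(x:ℂ))))
          = (fun t : ℂ => (x:ℂ) ^ (s - 1) * Complex.exp (-a * (x:ℂ)) *
            (1 - t * Complex.exp (-(x:ℂ)))⁻¹) := by
        funext u; rw [div_eq_mul_inv]
      rw [heq]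
      exact h2.congr_deriv (by field_simp)
    have hmeas : ∀ᶠ t in 𝓝 t₀, AEStronglyMeasurable
        (fun x : ℝ => (x:ℂ) ^ (s - 1) * Complex.exp (-a * (x:ℂ)) /
          (1 - t * Complex.exp (-(x:ℂ)))) (volume.restrict (Set.Ioi 0)) :=
      Filter.eventually_of_mem (Metric.ball_mem_nhds t₀ hε) (fun t ht =>
        ((HLaux.contOn_integrand a s t hc (hball t ht)).aestronglyMeasurable measurableSet_Ioi))
    have hint : Integrable (fun x : ℝ => (x:ℂ) ^ (s - 1) * Complex.exp (-a * (x:ℂ)) /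
        (1 - t₀ * Complex.exp (-(x:ℂ)))) (volume.restrict (Set.Ioi 0)) := part1 t₀ ht₀
    have hmeas' : AEStronglyMeasurable
        (fun x : ℝ => (x:ℂ) ^ (s - 1) * Complex.exp (-a * (x:ℂ)) * Complex.exp (-(x:ℂ)) /
          (1 - t₀ * Complex.exp (-(x:ℂ))) ^ 2) (volume.restrict (Set.Ioi 0)) := by
      refine ContinuousOn.aestronglyMeasurable ?_ measurableSet_Ioi
      refine ContinuousOn.div ?_ ?_ (fun x hx => pow_ne_zero 2 (HLaux.denom_ne hc hbt₀ hx))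
      · exact (HLaux.contOn_num a s).mul ((Complex.continuous_exp.comp
          Complex.continuous_ofReal.neg).continuousOn)
      · exact ((continuous_const.sub (continuous_const.mul (Complex.continuous_exp.comp
          Complex.continuous_ofReal.neg))).pow 2).continuousOn
    have hbint : Integrable (fun x : ℝ => c⁻¹ * (c⁻¹ * (x ^ (s.re - 1) * Real.exp (-a.re * x))))
        (volume.restrict (Set.Ioi 0)) :=
      ((HLaux.integrable_bound hs ha).const_mul c⁻¹).const_mul c⁻¹
    obtain ⟨-, hderiv⟩ := hasDerivAt_integral_of_dominated_loc_of_deriv_le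
      (F := fun t (x:ℝ) => (x:ℂ) ^ (s - 1) * Complex.exp (-a * (x:ℂ)) /
        (1 - t * Complex.exp (-(x:ℂ))))
      (F' := fun t (x:ℝ) => (x:ℂ) ^ (s - 1) * Complex.exp (-a * (x:ℂ)) *
        Complex.exp (-(x:ℂ)) / (1 - t * Complex.exp (-(x:ℂ))) ^ 2)
      (bound := fun x : ℝ => c⁻¹ * (c⁻¹ * (x ^ (s.re - 1) * Real.exp (-a.re * x)))) (Metric.ball_mem_nhds t₀ hε)
      hmeas hint hmeas' hbound hbint hdiff
    have hF : DifferentiableAt ℂ (lerchF a s) t₀ := by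
      have h2 := hderiv.differentiableAt.const_mul ((Complex.Gamma s)⁻¹)
      exact h2
    exact hF.differentiableWithinAt
  · -- series identity
    intro t ht
    have hwre : ∀ n : ℕ, 0 < ((n:ℂ) + a).re := fun n => by
      simp only [Complex.add_re, Complex.natCast_re]
      positivity
    set G : ℕ → ℝ → ℂ := fun n x => t ^ n *
      ((x:ℂ) ^ (s - 1) * Complex.exp (-((n:ℂ) + a) * (x:ℂ))) with hG
    have hint : ∀ n, Integrable (G n) (volume.restrict (Set.Ioi 0)) := fun n =>
      (HLaux.integrable_cexp hs (hwre n)).const_mul (t ^ n)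
    have hC : IntegrableOn (fun x : ℝ => x ^ (s.re - 1) * Real.exp (-a.re * x)) (Set.Ioi 0) :=
      HLaux.integrable_bound hs ha
    set C : ℝ := ∫ x in Set.Ioi (0:ℝ), x ^ (s.re - 1) * Real.exp (-a.re * x) with hCdef
    have hboundn : ∀ n : ℕ, (∫ x in Set.Ioi (0:ℝ), ‖G n x‖) ≤ C * ‖t‖ ^ n := by
      intro n
      have hle : ∀ x ∈ Set.Ioi (0:ℝ),
          ‖G n x‖ ≤ ‖t‖ ^ n * (x ^ (s.re - 1) * Real.exp (-a.re * x)) := by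
        intro x hx
        have hx0 : (0:ℝ) < x := hx
        rw [hG]
        simp only
        rw [norm_mul, norm_pow, HLaux.norm_num_eq ((n:ℂ) + a) s hx0]
        have hre : ((n:ℂ) + a).re = (n:ℝ) + a.re := by
          simp [Complex.add_re]
        have hexp : Real.exp (-((n:ℂ) + a).re * x) ≤ Real.exp (-a.re * x) := by
          apply Real.exp_le_exp.2
          rw [hre]
          nlinarith [Nat.cast_nonneg (α := ℝ) n]
        have h1 : (0:ℝ) ≤ ‖t‖ ^ n := by positivity
        have h2 : (0:ℝ) ≤ x ^ (s.re - 1) := Real.rpow_nonneg hx0.le _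
        exact mul_le_mul_of_nonneg_left (mul_le_mul_of_nonneg_left hexp h2) h1
      have hmono := integral_mono_of_nonneg
        (f := fun x : ℝ => ‖G n x‖)
        (g := fun x : ℝ => ‖t‖ ^ n * (x ^ (s.re - 1) * Real.exp (-a.re * x)))
        (μ := volume.restrict (Set.Ioi 0))
        (Filter.Eventually.of_forall (fun x => norm_nonneg _))
        (hC.const_mul (‖t‖ ^ n))
        (by
          filter_upwards [self_mem_ae_restrict
            (measurableSet_Ioi : MeasurableSet (Set.Ioi (0:ℝ)))] with x hx
          exact hle x hx)
      calc (∫ x in Set.Ioi (0:ℝ), ‖G n x‖)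
          ≤ ∫ x in Set.Ioi (0:ℝ), ‖t‖ ^ n * (x ^ (s.re - 1) * Real.exp (-a.re * x)) := hmono
        _ = ‖t‖ ^ n * C := by rw [integral_const_mul]
        _ = C * ‖t‖ ^ n := mul_comm _ _
    have hsum2 : Summable fun n : ℕ => ∫ x in Set.Ioi (0:ℝ), ‖G n x‖ :=
      Summable.of_nonneg_of_le (fun n => integral_nonneg (fun x => norm_nonneg _)) hboundn
        ((summable_geometric_of_lt_one (norm_nonneg t) ht).mul_left C)
    have hHS := hasSum_integral_of_summable_integral_norm hint hsum2
    have hval : ∀ n : ℕ, (∫ x in Set.Ioi (0:ℝ), G n x)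
        = t ^ n * (Complex.Gamma s * ((n:ℂ) + a) ^ (-s)) := by
      intro n
      rw [hG]
      simp only
      rw [integral_const_mul, HLaux.integral_cexp hs ((n:ℂ) + a) (hwre n)]
    have hlim : (∫ x in Set.Ioi (0:ℝ), ∑' n : ℕ, G n x)
        = ∫ x in Set.Ioi (0:ℝ),
          (x:ℂ) ^ (s - 1) * Complex.exp (-a * (x:ℂ)) / (1 - t * Complex.exp (-(x:ℂ))) := by
      refine setIntegral_congr_fun measurableSet_Ioi (fun x hx => ?_)
      have hx0 : (0:ℝ) < x := hx
      have hlt : ‖t * Complex.exp (-(x:ℂ))‖ < 1 := by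
        rw [norm_mul, Complex.norm_exp]
        have h1 : Real.exp ((-(x:ℂ)).re) ≤ 1 := by
          simp only [Complex.neg_re, Complex.ofReal_re]
          exact Real.exp_le_one_iff.2 (by linarith)
        nlinarith [norm_nonneg t, Real.exp_pos ((-(x:ℂ)).re)]
      have hgeo := (hasSum_geometric_of_norm_lt_one hlt).mul_left
        ((x:ℂ) ^ (s - 1) * Complex.exp (-a * (x:ℂ)))
      have hfun : ∀ n : ℕ, ((x:ℂ) ^ (s - 1) * Complex.exp (-a * (x:ℂ))) *
          (t * Complex.exp (-(x:ℂ))) ^ n = G n x := by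
        intro n
        rw [hG]
        simp only
        rw [mul_pow, ← Complex.exp_nat_mul,
          show -(((n:ℂ) + a)) * (x:ℂ) = -a * (x:ℂ) + (n:ℂ) * (-(x:ℂ)) by ring,
          Complex.exp_add]
        ring
      simp only [hfun] at hgeo
      rw [hgeo.tsum_eq, div_eq_mul_inv]
    rw [hlim] at hHS
    simp only [hval] at hHS
    have h2 := hHS.mul_left ((Complex.Gamma s)⁻¹)
    have h3 : ∀ n : ℕ, (Complex.Gamma s)⁻¹ * (t ^ n * (Complex.Gamma s * ((n:ℂ) + a) ^ (-s)))
        = t ^ n / ((n:ℂ) + a) ^ s := by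
      intro n
      rw [Complex.cpow_neg, div_eq_mul_inv,
        show (Complex.Gamma s)⁻¹ * (t ^ n * (Complex.Gamma s * (((n:ℂ) + a) ^ s)⁻¹))
          = (Complex.Gamma s)⁻¹ * Complex.Gamma s * (t ^ n * (((n:ℂ) + a) ^ s)⁻¹) by ring,
        inv_mul_cancel₀ hΓ, one_mul]
    simp only [h3] at h2
    refine ⟨h2.summable, ?_⟩
    unfold lerchF
    exact h2.tsum_eq.symm
end
end

section
/- Let a ∈ ℂ with Re(a) > 0, let s > 0 be real, and let θ ≢ 0 (mod 2π). Then the analytic continuation F(t) = (1/Γ(s))·∫₀^∞ ζ^{s−1}·e^{−aζ}/(1 − t·e^{−ζ}) dζ of the Hurwitz–Lerch transcendent satisfies |F(r·e^{iθ})| ≤ 1/(C(θ)·(Re a)^s) for all r > 0. In particular F is bounded on the ray L_θ. -/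
open Complex MeasureTheory

noncomputable section

lemma abs_sq_key (θ ρ : ℝ) :
    (‖1 - (ρ:ℂ) * Complex.exp ((θ:ℂ) * Complex.I)‖)^2
      = (1 - ρ * Real.cos θ)^2 + (ρ * Real.sin θ)^2 := by
  rw [Complex.sq_norm, Complex.normSq_apply, Complex.exp_mul_I]
  simp [Complex.cos_ofReal_re, Complex.sin_ofReal_re]
  ring

lemma Cdir_pos_and_le (θ : ℝ) (hθ : NonzeroDir θ) :
    0 < Cdir θ ∧ ∀ ρ : ℝ, 0 < ρ →
      Cdir θ ≤ ‖1 - (ρ:ℂ) * Complex.exp ((θ:ℂ) * Complex.I)‖ := by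
  have habs : ∀ ρ : ℝ, 0 ≤ ‖1 - (ρ:ℂ) * Complex.exp ((θ:ℂ) * Complex.I)‖ :=
    fun ρ => norm_nonneg _
  have hpyth := Real.sin_sq_add_cos_sq θ
  unfold Cdir
  split_ifs with h
  · obtain ⟨φ, hmem, hφ0, j, hj⟩ := h
    have hsin : Real.sin θ = Real.sin φ := by
      rw [hj]
      have : φ + 2 * Real.pi * (j:ℝ) = φ + (j:ℝ) * (2 * Real.pi) := by ring
      rw [this, Real.sin_add_int_mul_two_pi]
    have hsφ : Real.sin φ ≠ 0 := by
      intro hc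
      exact hφ0 ((Real.sin_eq_zero_iff_of_lt_of_lt
        (by linarith [hmem.1, Real.pi_pos]) (by linarith [hmem.2, Real.pi_pos])).mp hc)
    have hpos : 0 < |Real.sin θ| := by rw [hsin]; exact abs_pos.mpr hsφ
    refine ⟨hpos, fun ρ hρ => ?_⟩
    have hk := abs_sq_key θ ρ
    rw [← pow_le_pow_iff_left₀ (abs_nonneg _) (habs ρ) two_ne_zero]
    nlinarith [sq_nonneg (Real.cos θ - ρ), _root_.sq_abs (Real.sin θ)]
  · have hcos : Real.cos θ ≤ 0 := by
      by_contra hc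
      push_neg at hc
      set φ := toIocMod Real.two_pi_pos (-Real.pi) θ with hφdef
      have hmem := toIocMod_mem_Ioc Real.two_pi_pos (-Real.pi) θ
      have h2 : -Real.pi + 2 * Real.pi = Real.pi := by ring
      rw [h2] at hmem
      obtain ⟨hl, hr⟩ := hmem
      have hsub := self_sub_toIocMod Real.two_pi_pos (-Real.pi) θ
      set j := toIocDiv Real.two_pi_pos (-Real.pi) θ with hjdef
      have hθeq : θ = φ + 2 * Real.pi * (j:ℝ) := by
        have : θ - φ = (j:ℝ) * (2 * Real.pi) := by
          rw [hsub]; push_cast [zsmul_eq_mul]; ring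
        linarith
      have hcosφ : Real.cos φ = Real.cos θ := by
        rw [hθeq]
        have : φ + 2 * Real.pi * (j:ℝ) = φ + (j:ℝ) * (2 * Real.pi) := by ring
        rw [this, Real.cos_add_int_mul_two_pi]
      have hφmem : φ ∈ Set.Ioo (-(Real.pi / 2)) (Real.pi / 2) := by
        constructor
        · by_contra hcon
          push_neg at hcon
          have : Real.cos (-φ) ≤ 0 :=
            Real.cos_nonpos_of_pi_div_two_le_of_le (by linarith) (by linarith [Real.pi_pos])
          rw [Real.cos_neg, hcosφ] at this; linarith
        · by_contra hcon
          push_neg at hcon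
          have : Real.cos φ ≤ 0 :=
            Real.cos_nonpos_of_pi_div_two_le_of_le (by linarith) (by linarith [Real.pi_pos])
          rw [hcosφ] at this; linarith
      have hφ0 : φ ≠ 0 := by
        intro hc
        exact hθ ⟨j, by rw [hθeq, hc, zero_add]⟩
      exact h ⟨φ, hφmem, hφ0, j, hθeq⟩
    refine ⟨one_pos, fun ρ hρ => ?_⟩
    have hk := abs_sq_key θ ρ
    rw [← pow_le_pow_iff_left₀ zero_le_one (habs ρ) two_ne_zero]
    nlinarith [mul_nonneg hρ.le (neg_nonneg.mpr hcos)]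

/-- For `Re a > 0`, real `s > 0` and `θ ≢ 0 (mod 2π)`, the analytic continuation
`F(t) = Γ(s)⁻¹ ∫₀^∞ ζ^{s-1} e^{-aζ}/(1 - t e^{-ζ}) dζ` of the Hurwitz–Lerch transcendent
satisfies `|F(r e^{iθ})| ≤ 1/(C(θ) (Re a)^s)` for all `r > 0`. -/
theorem hurwitz_lerch_bounded_on_ray (a : ℂ) (s : ℝ) (ha : 0 < a.re) (hs : 0 < s)
    (θ : ℝ) (hθ : NonzeroDir θ) :
    ∀ r : ℝ, 0 < r →
      ‖lerchF a (s : ℂ) ((r : ℂ) * Complex.exp ((θ : ℂ) * Complex.I))‖ ≤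
        1 / (Cdir θ * a.re ^ s) := by
  intro r hr
  obtain ⟨hC, hCle⟩ := Cdir_pos_and_le θ hθ
  set b := a.re with hbdef
  set t : ℂ := (r : ℂ) * Complex.exp ((θ : ℂ) * Complex.I) with htdef
  set C := Cdir θ with hCdef
  have hΓ : 0 < Real.Gamma s := Real.Gamma_pos_of_pos hs
  -- integrability of the dominating function
  have hgint : IntegrableOn (fun x : ℝ => x ^ (s - 1) * Real.exp (-(b * x))) (Set.Ioi 0) := by
    have h0 := Real.GammaIntegral_convergent hs
    have h1 : IntegrableOn (fun x : ℝ => Real.exp (-(b * x)) * (b * x) ^ (s - 1))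
        (Set.Ioi 0) := by
      have := (integrableOn_Ioi_comp_mul_left_iff
        (fun x : ℝ => Real.exp (-x) * x ^ (s - 1)) 0 ha).mpr (by simpa using h0)
      simpa using this
    have h2 : IntegrableOn
        (fun x : ℝ => b ^ (1 - s) * (Real.exp (-(b * x)) * (b * x) ^ (s - 1)))
        (Set.Ioi 0) := h1.const_mul (b ^ (1 - s))
    refine h2.congr_fun (fun x hx => ?_) measurableSet_Ioi
    have hx0 : (0:ℝ) < x := hx
    beta_reduce
    rw [Real.mul_rpow ha.le hx0.le]
    rw [show b ^ (1-s) * (Real.exp (-(b*x)) * (b ^ (s-1) * x ^ (s-1)))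
        = (b ^ (1-s) * b ^ (s-1)) * (x ^ (s-1) * Real.exp (-(b*x))) by ring,
      ← Real.rpow_add ha]
    norm_num
  -- pointwise bound
  have hbound : ‖∫ ζ in Set.Ioi (0:ℝ),
      (ζ : ℂ) ^ ((s:ℂ) - 1) * Complex.exp (-a * (ζ : ℂ)) / (1 - t * Complex.exp (-(ζ : ℂ)))‖
      ≤ ∫ x in Set.Ioi (0:ℝ), x ^ (s - 1) * Real.exp (-(b * x)) / C := by
    refine (norm_integral_le_integral_norm _).trans ?_
    refine integral_mono_of_nonneg (ae_of_all _ fun x => norm_nonneg _)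
      (hgint.div_const C) ?_
    filter_upwards [ae_restrict_mem measurableSet_Ioi] with x hx
    have hx0 : (0:ℝ) < x := hx
    set ρ : ℝ := r * Real.exp (-x) with hρdef
    have hρ : 0 < ρ := mul_pos hr (Real.exp_pos _)
    have hden : (1 : ℂ) - t * Complex.exp (-(x:ℂ)) =
        1 - (ρ:ℂ) * Complex.exp ((θ:ℂ) * Complex.I) := by
      rw [htdef, hρdef]
      push_cast [Complex.ofReal_exp]
      ring
    have hDpos : C ≤ ‖1 - t * Complex.exp (-(x:ℂ))‖ := by
      rw [hden]; exact hCle ρ hρ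
    rw [norm_div, norm_mul,
      Complex.norm_cpow_eq_rpow_re_of_pos hx0, Complex.norm_exp]
    have h1 : ((s:ℂ) - 1).re = s - 1 := by simp
    have h2 : (-a * (x:ℂ)).re = -(b * x) := by simp [hbdef]
    rw [h1, h2]
    exact div_le_div_of_nonneg_left
      (mul_nonneg (Real.rpow_nonneg hx0.le _) (Real.exp_pos _).le) hC hDpos
  -- value of the dominating integral
  have hval : ∫ x in Set.Ioi (0:ℝ), x ^ (s - 1) * Real.exp (-(b * x)) / C
      = (1 / b) ^ s * Real.Gamma s / C := by
    rw [integral_div, Real.integral_rpow_mul_exp_neg_mul_Ioi hs ha]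
  -- put it together
  rw [lerchF, norm_mul, norm_inv]
  have hΓc : ‖Complex.Gamma (s:ℂ)‖ = Real.Gamma s := by
    rw [Complex.Gamma_ofReal, Complex.norm_real, Real.norm_eq_abs, abs_of_pos hΓ]
  rw [hΓc]
  calc (Real.Gamma s)⁻¹ * ‖∫ ζ in Set.Ioi (0:ℝ),
        (ζ : ℂ) ^ ((s:ℂ) - 1) * Complex.exp (-a * (ζ : ℂ)) / (1 - t * Complex.exp (-(ζ : ℂ)))‖
      ≤ (Real.Gamma s)⁻¹ * ((1 / b) ^ s * Real.Gamma s / C) := by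
        rw [← hval]
        exact mul_le_mul_of_nonneg_left hbound (inv_nonneg.mpr hΓ.le)
    _ = 1 / (C * b ^ s) := by
        rw [one_div b, Real.inv_rpow ha.le]
        field_simp
end
end

section
/- Let k ∈ ℕ with k ≥ 1 and let a₁ > a₂ > … > a_k > 0 be real numbers. Then the sequence m : ℕ → (0,∞) defined by m(n) = a₁ⁿ + a₂ⁿ + … + a_kⁿ preserves summability. -/
open Complex MeasureTheory

noncomputable section

set_option linter.unusedSectionVars false

section ListGeom
variable {ι : Type*} [Fintype ι]

lemma aux_listProd_map_pow (z : ι → ℝ) (n : ℕ) (l : List ι) :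
    (l.map (fun i => z i ^ n)).prod = (l.map z).prod ^ n := by
  induction l with
  | nil => simp
  | cons a l ih => simp [ih, mul_pow]

lemma aux_listProd_map_neg (z : ι → ℝ) (l : List ι) :
    (l.map (fun i => -(z i))).prod = (-1) ^ l.length * (l.map z).prod := by
  induction l with
  | nil => simp
  | cons a l ih => simp [ih]; ring

lemma aux_listProd_bounds {z : ι → ℝ} {Q : ℝ} (hQ : 0 ≤ Q) (h0 : ∀ i, 0 ≤ z i)
    (hz : ∀ i, z i ≤ Q) (l : List ι) :
    0 ≤ (l.map z).prod ∧ (l.map z).prod ≤ Q ^ l.length := by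
  induction l with
  | nil => simp
  | cons a l ih =>
    refine ⟨mul_nonneg (h0 a) ih.1, ?_⟩
    have : z a * (l.map z).prod ≤ Q * Q ^ l.length :=
      mul_le_mul (hz a) ih.2 ih.1 hQ
    simpa [pow_succ, mul_comm] using this

lemma aux_comp (z : ι → ℝ) (p : Σ n : ℕ, Fin n → ι) :
    ((((List.equivSigmaTuple (α := ι)).symm p)).map z).prod = ∏ t, z (p.2 t) := by
  show ((List.ofFn p.2).map z).prod = _
  rw [List.map_ofFn, List.prod_ofFn]
  rfl

lemma aux_sigma_prod_eq (z : ι → ℝ) (n : ℕ) :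
    ∑' f : Fin n → ι, ∏ t, z (f t) = (∑ i, z i) ^ n := by
  classical
  rw [tsum_fintype]
  rw [Finset.sum_pow' Finset.univ z n]
  rw [Fintype.piFinset_univ]

lemma aux_summable_sigma (z : ι → ℝ) (h : ∑ i, |z i| < 1) :
    Summable (fun p : Σ n : ℕ, Fin n → ι => ∏ t, z (p.2 t)) := by
  classical
  have h0 : (0:ℝ) ≤ ∑ i, |z i| := Finset.sum_nonneg fun i _ => abs_nonneg _
  apply Summable.of_norm
  have habs : ∀ p : Σ n : ℕ, Fin n → ι, ‖∏ t, z (p.2 t)‖ = ∏ t, |z (p.2 t)| := by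
    intro p; rw [Real.norm_eq_abs, Finset.abs_prod]
  rw [show (fun p : Σ n : ℕ, Fin n → ι => ‖∏ t, z (p.2 t)‖) =
      (fun p : Σ n : ℕ, Fin n → ι => ∏ t, |z (p.2 t)|) from funext habs]
  rw [summable_sigma_of_nonneg (fun p => Finset.prod_nonneg fun t _ => abs_nonneg _)]
  constructor
  · intro n; exact Summable.of_finite
  · apply Summable.congr (summable_geometric_of_lt_one h0 h)
    intro n
    exact (aux_sigma_prod_eq (fun i => |z i|) n).symm

lemma aux_summable_listProd (z : ι → ℝ) (h : ∑ i, |z i| < 1) :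
    Summable (fun l : List ι => (l.map z).prod) := by
  have hs := aux_summable_sigma z h
  rw [← ((List.equivSigmaTuple (α := ι)).symm).summable_iff]
  apply hs.congr
  intro p
  exact (aux_comp z p).symm

lemma aux_tsum_listProd (z : ι → ℝ) (h : ∑ i, |z i| < 1) :
    ∑' l : List ι, (l.map z).prod = (1 - ∑ i, z i)⁻¹ := by
  rw [← Equiv.tsum_eq (List.equivSigmaTuple (α := ι)).symm]
  rw [tsum_congr (aux_comp z)]
  rw [Summable.tsum_sigma (aux_summable_sigma z h)]
  rw [tsum_congr (fun n => aux_sigma_prod_eq z n)]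
  have hnorm : ‖∑ i, z i‖ < 1 := by
    rw [Real.norm_eq_abs]
    exact lt_of_le_of_lt (Finset.abs_sum_le_sum_abs _ _) h
  exact tsum_geometric_of_norm_lt_one hnorm

lemma aux_summable_pow_length (q : ℝ) (hq : 0 ≤ q) (h : (Fintype.card ι : ℝ) * q < 1) :
    Summable (fun l : List ι => q ^ l.length) := by
  have h' : ∑ _i : ι, |q| < 1 := by
    rw [Finset.sum_const, Finset.card_univ, nsmul_eq_mul, _root_.abs_of_nonneg hq]
    exact h
  apply (aux_summable_listProd (fun _ : ι => q) h').congr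
  intro l
  rw [List.map_const', List.prod_replicate]

end ListGeom

lemma aux_one_sub_smul_exp_lb (s φ : ℝ) (hs : 0 ≤ s) :
    ‖(1 - Complex.exp (φ * I))‖ / 2 ≤
      ‖(1 - (s : ℂ) * Complex.exp (φ * I))‖ := by
  set z := Complex.exp ((φ : ℂ) * I) with hz
  have hz1 : ‖z‖ = 1 := Complex.norm_exp_ofReal_mul_I φ
  have h1 : |s - 1| ≤ ‖(1 - (s:ℂ) * z)‖ := by
    have h := abs_norm_sub_norm_le ((s:ℂ) * z) 1
    rw [norm_sub_rev] at h
    simpa [hz1, _root_.abs_of_nonneg hs] using h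
  have h2 : ‖(1 - z)‖ ≤ ‖(1 - (s:ℂ)*z)‖ + ‖((s:ℂ)*z - z)‖ := by
    have heq : (1 : ℂ) - z = (1 - (s:ℂ)*z) + ((s:ℂ)*z - z) := by ring
    rw [heq]; exact norm_add_le _ _
  have h3 : ‖((s:ℂ)*z - z)‖ = |s - 1| := by
    have heq : (s:ℂ)*z - z = ((s - 1 : ℝ) : ℂ) * z := by push_cast; ring
    rw [heq, norm_mul, hz1, mul_one, Complex.norm_real, Real.norm_eq_abs]
  linarith


set_option maxHeartbeats 1600000

/-- For real numbers `a₁ > a₂ > … > a_k > 0`, the sequence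
`m(n) = a₁ⁿ + … + a_kⁿ` preserves summability. -/
theorem sum_of_powers_preserves_summability
    (k : ℕ) (hk : 1 ≤ k) (a : Fin k → ℝ) (ha_anti : StrictAnti a)
    (ha_pos : ∀ i, 0 < a i) :
    PreservesSummability (fun n : ℕ => ∑ i : Fin k, a i ^ n) := by
  obtain ⟨k', rfl⟩ : ∃ k', k = k' + 1 := ⟨k - 1, (Nat.succ_pred_eq_of_pos hk).symm⟩
  set m : ℕ → ℝ := fun n => ∑ i : Fin (k' + 1), a i ^ n with hm_def
  have ha0 : 0 < a 0 := ha_pos 0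
  have ha0' : (a 0 : ℝ) ≠ 0 := ne_of_gt ha0
  have hale : ∀ i, a i ≤ a 0 := fun i => ha_anti.antitone (Fin.zero_le i)
  have hm_lb : ∀ n, a 0 ^ n ≤ m n := fun n =>
    Finset.single_le_sum (f := fun (i : Fin (k' + 1)) => a i ^ n)
      (fun i _ => pow_nonneg (ha_pos i).le n) (Finset.mem_univ 0)
  have hm_pos : ∀ n, 0 < m n := fun n => lt_of_lt_of_le (pow_pos ha0 n) (hm_lb n)
  have hm_ub : ∀ n, m n ≤ ((k' : ℝ) + 1) * a 0 ^ n := by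
    intro n
    calc m n ≤ ∑ _i : Fin (k' + 1), a 0 ^ n :=
          Finset.sum_le_sum fun i _ => pow_le_pow_left₀ (ha_pos i).le (hale i) n
      _ = ((k' : ℝ) + 1) * a 0 ^ n := by
          rw [Finset.sum_const, Finset.card_univ, Fintype.card_fin, nsmul_eq_mul]
          push_cast; ring
  set r : Fin k' → ℝ := fun i => a i.succ / a 0 with hr_def
  have hr_pos : ∀ i, 0 < r i := fun i => div_pos (ha_pos _) ha0
  have hr_lt1 : ∀ i, r i < 1 := fun i => (div_lt_one ha0).2 (ha_anti (Fin.succ_pos i))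
  set S : ℕ → ℝ := fun n => ∑ i : Fin k', r i ^ n with hS_def
  have hS_nonneg : ∀ n, 0 ≤ S n := fun n =>
    Finset.sum_nonneg fun i _ => pow_nonneg (hr_pos i).le n
  have hmS : ∀ n, m n = a 0 ^ n * (1 + S n) := by
    intro n
    have key : ∀ i : Fin k', a i.succ ^ n = a 0 ^ n * r i ^ n := by
      intro i
      simp only [hr_def]
      rw [div_pow, mul_div_cancel₀ _ (pow_ne_zero _ ha0')]
    simp only [hm_def, hS_def]
    rw [Fin.sum_univ_succ]
    simp only [key]
    rw [← Finset.mul_sum]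
    ring
  obtain ⟨Q, hQ0, hQ1, hQr⟩ : ∃ Q : ℝ, 0 ≤ Q ∧ Q < 1 ∧ ∀ i : Fin k', r i ≤ Q := by
    rcases Nat.eq_zero_or_pos k' with hk0 | hk0
    · subst hk0
      exact ⟨1/2, by norm_num, by norm_num, fun i => i.elim0⟩
    · have hne : Nonempty (Fin k') := ⟨⟨0, hk0⟩⟩
      have hne' : (Finset.univ : Finset (Fin k')).Nonempty := Finset.univ_nonempty
      refine ⟨Finset.univ.sup' hne' r, ?_, ?_, ?_⟩
      · exact le_trans (hr_pos ⟨0, hk0⟩).le (Finset.le_sup' r (Finset.mem_univ _))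
      · rw [Finset.sup'_lt_iff]
        exact fun i _ => hr_lt1 i
      · exact fun i => Finset.le_sup' r (Finset.mem_univ i)
  obtain ⟨N, hN⟩ : ∃ N : ℕ, (k' : ℝ) * Q ^ N < 1/2 := by
    obtain ⟨N, hN⟩ := exists_pow_lt_of_lt_one
      (show (0:ℝ) < 1/(2*((k':ℝ)+1)) by positivity) hQ1
    refine ⟨N, ?_⟩
    have hQN : 0 ≤ Q ^ N := pow_nonneg hQ0 N
    have h1 : (k' : ℝ) * Q ^ N ≤ ((k':ℝ) + 1) * Q ^ N :=
      mul_le_mul_of_nonneg_right (by linarith) hQN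
    have h2 : ((k':ℝ) + 1) * Q ^ N < ((k':ℝ)+1) * (1/(2*((k':ℝ)+1))) :=
      mul_lt_mul_of_pos_left hN (by positivity)
    have h3 : ((k':ℝ)+1) * (1/(2*((k':ℝ)+1))) = 1/2 := by
      field_simp
    linarith
  have hQpow : ∀ n, N ≤ n → (k':ℝ) * Q ^ n < 1/2 := fun n hn =>
    lt_of_le_of_lt (mul_le_mul_of_nonneg_left
      (pow_le_pow_of_le_one hQ0 hQ1.le hn) (Nat.cast_nonneg k')) hN
  have hS_le : ∀ n, S n ≤ (k':ℝ) * Q ^ n := by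
    intro n
    simp only [hS_def]
    calc (∑ i : Fin k', r i ^ n) ≤ ∑ _i : Fin k', Q ^ n :=
          Finset.sum_le_sum fun i _ => pow_le_pow_left₀ (hr_pos i).le (hQr i) n
      _ = (k':ℝ) * Q ^ n := by
          rw [Finset.sum_const, Finset.card_univ, Fintype.card_fin, nsmul_eq_mul]
  set p : List (Fin k') → ℝ := fun l => (l.map r).prod with hp_def
  have hp_bounds : ∀ l, 0 < p l ∧ p l ≤ Q ^ l.length := by
    intro l
    have h := aux_listProd_bounds hQ0 (fun i => (hr_pos i).le) hQr l
    refine ⟨List.prod_pos ?_, h.2⟩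
    intro y hy
    obtain ⟨i, _, rfl⟩ := List.mem_map.1 hy
    exact hr_pos i
  set c : List (Fin k') → ℝ := fun l => p l / a 0 with hc_def
  have hc_pos : ∀ l, 0 < c l := fun l => div_pos (hp_bounds l).1 ha0
  have hc_le : ∀ l, c l ≤ Q ^ l.length / a 0 := fun l =>
    (div_le_div_iff_of_pos_right ha0).2 (hp_bounds l).2
  have hc_le1 : ∀ l, c l ≤ 1 / a 0 := by
    intro l
    refine le_trans (hc_le l) ?_
    have h1 : Q ^ l.length ≤ 1 := pow_le_one₀ hQ0 hQ1.le
    exact (div_le_div_iff_of_pos_right ha0).2 h1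
  have hsum1 : ∀ t : ℂ, ‖t‖ < a 0 → Summable fun n : ℕ => t ^ n / (m n : ℂ) := by
    intro t ht
    apply Summable.of_norm
    apply Summable.of_nonneg_of_le (fun n => norm_nonneg _) ?_
      (summable_geometric_of_lt_one (by positivity) ((div_lt_one ha0).2 ht))
    intro n
    rw [norm_div, norm_pow, Complex.norm_real, Real.norm_eq_abs,
      _root_.abs_of_nonneg (hm_pos n).le, div_pow]
    exact div_le_div₀ (by positivity) le_rfl (pow_pos ha0 n) (hm_lb n)
  set c0 : ℝ := min (a 0 / 2) (1 / (2 * a 0)) with hc0_def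
  have hc0_pos : 0 < c0 := lt_min (by positivity) (by positivity)
  have hc0a : c0 ≤ a 0 / 2 := min_le_left _ _
  have hc0b : c0 ≤ 1 / (2 * a 0) := min_le_right _ _
  have hc0_mul1 : ∀ l, c l * c0 ≤ 1/2 := by
    intro l
    calc c l * c0 ≤ (1 / a 0) * (a 0 / 2) :=
          mul_le_mul (hc_le1 l) hc0a hc0_pos.le (by positivity)
      _ = 1/2 := by field_simp
  have hc0_mul2 : ∀ i : Fin (k' + 1), a i * c0 ≤ 1/2 := by
    intro i
    calc a i * c0 ≤ a 0 * (1/(2 * a 0)) := mul_le_mul (hale i) hc0b hc0_pos.le ha0.le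
      _ = 1/2 := by field_simp
  have hsum2 : ∀ t : ℂ, ‖t‖ < c0 → Summable fun n : ℕ => (m n : ℂ) * t ^ n := by
    intro t ht
    apply Summable.of_norm
    apply Summable.of_nonneg_of_le (fun n => norm_nonneg _)
      ?_ ((summable_geometric_of_lt_one (by norm_num) (by norm_num :
        (1:ℝ)/2 < 1)).mul_left ((k':ℝ)+1))
    intro n
    rw [norm_mul, norm_pow, Complex.norm_real, Real.norm_eq_abs,
      _root_.abs_of_nonneg (hm_pos n).le]
    calc m n * ‖t‖ ^ n ≤ ((k':ℝ)+1) * a 0 ^ n * ‖t‖ ^ n :=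
          mul_le_mul_of_nonneg_right (hm_ub n) (pow_nonneg (norm_nonneg t) n)
      _ = ((k':ℝ)+1) * (a 0 * ‖t‖) ^ n := by rw [mul_pow]; ring
      _ ≤ ((k':ℝ)+1) * (1/2) ^ n := by
          apply mul_le_mul_of_nonneg_left _ (by positivity)
          apply pow_le_pow_left₀ (by positivity)
          calc a 0 * ‖t‖ ≤ a 0 * c0 := mul_le_mul_of_nonneg_left ht.le ha0.le
            _ ≤ a 0 * (1/(2 * a 0)) := mul_le_mul_of_nonneg_left hc0b ha0.le
            _ = 1/2 := by field_simp
  refine ⟨⟨a 0, ha0, hsum1⟩, ⟨c0, hc0_pos, hsum2⟩, ?_⟩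
  intro kk hkk θ hθ
  have hpi := Real.pi_pos
  set x : ℝ := θ / (2 * Real.pi) with hx_def
  set δ : ℝ := |x - round x| with hδ_def
  have hδ_pos : 0 < δ := by
    rw [hδ_def, abs_pos, sub_ne_zero]
    intro hcon
    have h1 : θ = 2 * Real.pi * round x := by
      rw [hx_def] at hcon
      rw [div_eq_iff (ne_of_gt (by positivity : (0:ℝ) < 2 * Real.pi))] at hcon
      linarith
    exact hθ ⟨round x, h1⟩
  have hδ_half : δ ≤ 1/2 := abs_sub_round x
  have hδ_all : ∀ j : ℤ, δ ≤ |x - j| := by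
    intro j
    rcases eq_or_ne j (round x) with rfl | hj
    · exact le_of_eq rfl
    · have h1 : (1:ℝ) ≤ |(j:ℝ) - (round x : ℝ)| := by
        have h0 : (1:ℤ) ≤ |j - round x| := Int.one_le_abs (sub_ne_zero.2 hj)
        exact_mod_cast h0
      have h2 : |(j:ℝ) - (round x:ℝ)| ≤ |(j:ℝ) - x| + |x - (round x:ℝ)| :=
        abs_sub_le _ _ _
      have h3 : |(j:ℝ) - x| = |x - (j:ℝ)| := abs_sub_comm _ _
      rw [← hδ_def] at h2
      rw [h3] at h2
      linarith
  have hθj : ∀ j : ℤ, 2 * Real.pi * δ ≤ |θ - 2 * Real.pi * j| := by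
    intro j
    have h1 : θ - 2 * Real.pi * j = (2 * Real.pi) * (x - j) := by
      rw [hx_def]
      field_simp
    rw [h1, abs_mul, _root_.abs_of_pos (by positivity : (0:ℝ) < 2 * Real.pi)]
    exact mul_le_mul_of_nonneg_left (hδ_all j) (by positivity)
  set α : ℝ := Real.pi * δ with hα_def
  have hα_pos : 0 < α := by positivity
  have hφj : ∀ φ ∈ Set.Icc (θ - α/2) (θ + α/2), ∀ j : ℤ, φ ≠ 2 * Real.pi * j := by
    intro φ hφ j hcon
    have h2 := hθj j
    rw [← hcon] at h2
    have h3 : |θ - φ| ≤ α/2 := by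
      rw [abs_sub_le_iff]
      exact ⟨by linarith [hφ.1], by linarith [hφ.2]⟩
    rw [hα_def] at h3
    have h5 : 0 < Real.pi * δ := by positivity
    linarith [h2, h3]
  have hIcc_mem : θ ∈ Set.Icc (θ - α/2) (θ + α/2) := by
    constructor <;> linarith
  have hcont1 : Continuous fun φ : ℝ => ‖(1 - Complex.exp (φ * Complex.I))‖ := by
    apply continuous_norm.comp
    exact continuous_const.sub (Complex.continuous_exp.comp
      (Complex.continuous_ofReal.mul continuous_const))
  obtain ⟨φ0, hφ0_mem, hφ0_min⟩ :=
    (isCompact_Icc (a := θ - α/2) (b := θ + α/2)).exists_isMinOn ⟨θ, hIcc_mem⟩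
      hcont1.continuousOn
  set d : ℝ := ‖(1 - Complex.exp (φ0 * Complex.I))‖ with hd_def
  have hd_pos : 0 < d := by
    rw [hd_def]
    apply norm_pos_iff.2
    intro hcon
    have hexp : Complex.exp ((φ0:ℂ) * Complex.I) = 1 := (sub_eq_zero.1 hcon).symm
    rw [Complex.exp_eq_one_iff] at hexp
    obtain ⟨n, hn⟩ := hexp
    have h1 : (φ0 : ℂ) = (n:ℂ) * (2 * (Real.pi:ℂ)) :=
      mul_right_cancel₀ Complex.I_ne_zero (by rw [hn]; ring)
    have h1' : (φ0 : ℂ) = ((2 * Real.pi * (n:ℝ) : ℝ) : ℂ) := by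
      rw [h1]; push_cast; ring
    have h2 : φ0 = 2 * Real.pi * (n:ℝ) := by exact_mod_cast h1'
    exact hφj φ0 hφ0_mem n h2
  have hd_le : ∀ φ ∈ Set.Icc (θ - α/2) (θ + α/2),
      d ≤ ‖(1 - Complex.exp (φ * Complex.I))‖ :=
    fun φ hφ => (isMinOn_iff.1 hφ0_min) φ hφ
  have hsec_lb : ∀ t ∈ Sector θ α, ∀ cc : ℝ, 0 ≤ cc →
      d/2 ≤ ‖(1 - t * cc)‖ := by
    intro t ht cc hcc
    obtain ⟨ρ, φ, hρ, hφ, rfl⟩ := ht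
    have hmem : φ ∈ Set.Icc (θ - α/2) (θ + α/2) := by
      rw [abs_sub_lt_iff] at hφ
      exact ⟨by linarith [hφ.2], by linarith [hφ.1]⟩
    have heq : (↑ρ * Complex.exp (↑φ * Complex.I)) * (cc:ℂ)
        = ((ρ * cc : ℝ) : ℂ) * Complex.exp (↑φ * Complex.I) := by push_cast; ring
    rw [heq]
    have h1 := aux_one_sub_smul_exp_lb (ρ * cc) φ (mul_nonneg hρ.le hcc)
    have h2 := hd_le φ hmem
    linarith
  set mS : ℝ := min (1/2 : ℝ) (d/2) with hmS_def
  have hmS_pos : 0 < mS := lt_min (by norm_num) (by linarith)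
  have hDS_lb : ∀ t ∈ DiscSector θ α c0, ∀ cc : ℝ, 0 ≤ cc → cc * c0 ≤ 1/2 →
      mS ≤ ‖(1 - t * cc)‖ := by
    intro t ht cc hcc hcc2
    rcases ht with hsec | hball
    · exact le_trans (min_le_right _ _) (hsec_lb t hsec cc hcc)
    · refine le_trans (min_le_left _ _) ?_
      have ht' : ‖t‖ < c0 := by
        rw [Metric.mem_ball, dist_zero_right] at hball; exact hball
      have h1 : ‖t * (cc:ℂ)‖ ≤ 1/2 := by
        rw [norm_mul, Complex.norm_real, Real.norm_eq_abs, _root_.abs_of_nonneg hcc]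
        calc ‖t‖ * cc ≤ c0 * cc := mul_le_mul_of_nonneg_right ht'.le hcc
          _ ≤ 1/2 := by rw [mul_comm]; exact hcc2
      have h2 : (1:ℝ) - ‖t * (cc:ℂ)‖ ≤ ‖(1:ℂ) - t * cc‖ := by
        have h3 := norm_sub_norm_le (1:ℂ) (t * cc)
        simpa using h3
      linarith
  set U : Set ℂ := (SlitGe c0)ᶜ with hU_def
  have hSlit_closed : IsClosed (SlitGe c0) := by
    have h1 : SlitGe c0 = Complex.im ⁻¹' {0} ∩ Complex.re ⁻¹' Set.Ici c0 := by
      ext z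
      exact Iff.rfl
    rw [h1]
    exact (isClosed_singleton.preimage Complex.continuous_im).inter
      (isClosed_Ici.preimage Complex.continuous_re)
  have hU_open : IsOpen U := hSlit_closed.isOpen_compl
  have hden : ∀ t ∈ U, ∀ cc : ℝ, 0 < cc → cc * c0 ≤ 1 → (1 : ℂ) - t * cc ≠ 0 := by
    intro t ht cc hcc hle hcon
    have hccC : ((cc:ℝ) : ℂ) ≠ 0 := by exact_mod_cast ne_of_gt hcc
    have h1 : t * (cc:ℂ) = 1 := (sub_eq_zero.1 hcon).symm
    have ht_eq : t = ((1/cc : ℝ) : ℂ) := by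
      push_cast
      rw [eq_div_iff hccC]
      exact h1
    apply ht
    rw [ht_eq]
    refine ⟨by simp, ?_⟩
    simp only [Complex.ofReal_re]
    rw [le_div_iff₀ hcc]
    nlinarith
  have hDSU : DiscSector θ α c0 ⊆ U := by
    intro t ht hslit
    obtain ⟨him, hre⟩ := hslit
    rcases ht with hsec | hball
    · obtain ⟨ρ, φ, hρ, hφ, rfl⟩ := hsec
      have hmem : φ ∈ Set.Icc (θ - α/2) (θ + α/2) := by
        rw [abs_sub_lt_iff] at hφ
        exact ⟨by linarith [hφ.2], by linarith [hφ.1]⟩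
      have him' : ρ * Real.sin φ = 0 := by
        have h5 : ((ρ:ℂ) * Complex.exp (↑φ * Complex.I)).im = ρ * Real.sin φ := by
          simp [Complex.mul_im, Complex.exp_ofReal_mul_I_re, Complex.exp_ofReal_mul_I_im]
        rw [← h5]
        exact him
      have hsin : Real.sin φ = 0 := by
        rcases mul_eq_zero.1 him' with h | h
        · exact absurd h (ne_of_gt hρ)
        · exact h
      have hre' : c0 ≤ ρ * Real.cos φ := by
        have h5 : ((ρ:ℂ) * Complex.exp (↑φ * Complex.I)).re = ρ * Real.cos φ := by
          simp [Complex.mul_re, Complex.exp_ofReal_mul_I_re, Complex.exp_ofReal_mul_I_im]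
        rw [← h5]
        exact hre
      have hcos_pos : 0 < Real.cos φ := by
        by_contra hcon
        push_neg at hcon
        have h6 : ρ * Real.cos φ ≤ 0 := mul_nonpos_of_nonneg_of_nonpos hρ.le hcon
        linarith
      have hcos1 : Real.cos φ = 1 := by
        have hsq := Real.sin_sq_add_cos_sq φ
        rw [hsin] at hsq
        have h7 : (Real.cos φ - 1) * (Real.cos φ + 1) = 0 := by linear_combination hsq
        rcases mul_eq_zero.1 h7 with h | h
        · linarith
        · linarith
      obtain ⟨n, hn⟩ := (Real.cos_eq_one_iff φ).1 hcos1
      exact hφj φ hmem n (by linarith)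
    · rw [Metric.mem_ball, dist_zero_right] at hball
      have h1 : t.re ≤ ‖t‖ := by
        calc t.re ≤ |t.re| := le_abs_self _
          _ ≤ ‖t‖ := Complex.abs_re_le_norm t
      linarith
  have hmin : ∀ K : Set ℂ, IsCompact K → K ⊆ U → ∃ mb : ℝ, 0 < mb ∧
      ∀ t ∈ K, ∀ cc : ℝ, 0 ≤ cc → cc * c0 ≤ 1 → mb ≤ ‖(1 - t * cc)‖ := by
    intro K hK hKU
    rcases K.eq_empty_or_nonempty with rfl | hKne
    · exact ⟨1, one_pos, by simp⟩
    have hKc : IsCompact (K ×ˢ Set.Icc (0:ℝ) (1/c0)) := hK.prod isCompact_Icc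
    have hKcne : (K ×ˢ Set.Icc (0:ℝ) (1/c0)).Nonempty :=
      hKne.prod ⟨0, le_refl 0, by positivity⟩
    have hcont2 : Continuous fun q : ℂ × ℝ => ‖(1 - q.1 * q.2)‖ := by
      apply continuous_norm.comp
      exact continuous_const.sub (continuous_fst.mul
        (Complex.continuous_ofReal.comp continuous_snd))
    obtain ⟨q0, hq0_mem, hq0_min⟩ := hKc.exists_isMinOn hKcne hcont2.continuousOn
    refine ⟨‖(1 - q0.1 * q0.2)‖, ?_, ?_⟩
    · apply norm_pos_iff.2
      intro hcon
      have h2 := hq0_mem.2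
      rw [Set.mem_Icc] at h2
      have hccne : q0.2 ≠ 0 := by
        intro h0
        rw [h0] at hcon
        simp at hcon
      have hccpos : 0 < q0.2 := lt_of_le_of_ne h2.1 (Ne.symm hccne)
      have hccC : ((q0.2 : ℝ) : ℂ) ≠ 0 := by exact_mod_cast hccne
      have h1 : q0.1 * ((q0.2:ℝ):ℂ) = 1 := (sub_eq_zero.1 hcon).symm
      have ht_eq : q0.1 = ((1/q0.2 : ℝ) : ℂ) := by
        push_cast
        rw [eq_div_iff hccC]
        exact h1
      apply hKU hq0_mem.1
      rw [ht_eq]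
      refine ⟨by simp, ?_⟩
      simp only [Complex.ofReal_re]
      rw [le_div_iff₀ hccpos]
      calc c0 * q0.2 ≤ c0 * (1/c0) := mul_le_mul_of_nonneg_left h2.2 hc0_pos.le
        _ = 1 := by field_simp
    · intro t ht cc hcc hle
      have hmem : (t, cc) ∈ K ×ˢ Set.Icc (0:ℝ) (1/c0) := by
        refine ⟨ht, hcc, ?_⟩
        rw [le_div_iff₀ hc0_pos]
        exact hle
      exact (isMinOn_iff.1 hq0_min) (t, cc) hmem
  set fF : List (Fin k') → ℂ → ℂ := fun l t =>
    (-1 : ℂ) ^ l.length * ((t * (c l : ℂ)) ^ N / (1 - t * (c l : ℂ))) with hfF_def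
  set Fq : ℂ → ℂ := fun t =>
    (∑ n ∈ Finset.range N, t ^ n / (m n : ℂ)) + ∑' l : List (Fin k'), fF l t with hFq_def
  set Gq : ℂ → ℂ := fun t => ∑ i : Fin (k' + 1), (1 - t * (a i : ℂ))⁻¹ with hGq_def
  have hQN_lt : (Fintype.card (Fin k') : ℝ) * Q ^ N < 1 := by
    rw [Fintype.card_fin]
    linarith
  have hQN_sum : Summable (fun l : List (Fin k') => (Q ^ N) ^ l.length) :=
    aux_summable_pow_length _ (pow_nonneg hQ0 N) hQN_lt
  set SQ : ℝ := ∑' l : List (Fin k'), (Q ^ N) ^ l.length with hSQ_def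
  have hSQ_nonneg : 0 ≤ SQ :=
    tsum_nonneg fun l => pow_nonneg (pow_nonneg hQ0 N) _
  have hfF_norm : ∀ (l : List (Fin k')) (t : ℂ),
      ‖fF l t‖ = ‖t * (c l : ℂ)‖ ^ N / ‖(1 - t * (c l:ℂ))‖ := by
    intro l t
    simp only [hfF_def]
    simp only [norm_mul, norm_pow, norm_neg, norm_one, one_pow, one_mul, norm_div]
  have htc_norm : ∀ (l : List (Fin k')) (t : ℂ), ‖t * (c l : ℂ)‖ = ‖t‖ * c l := by
    intro l t
    rw [norm_mul, Complex.norm_real, Real.norm_eq_abs, _root_.abs_of_nonneg (hc_pos l).le]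
  have hpowQ : ∀ lg : ℕ, (Q ^ lg) ^ N = (Q ^ N) ^ lg := by
    intro lg
    rw [← pow_mul, ← pow_mul, Nat.mul_comm]
  have hfF_bound : ∀ (l : List (Fin k')) (t : ℂ) (mb : ℝ), 0 < mb →
      mb ≤ ‖(1 - t * (c l:ℂ))‖ →
      ‖fF l t‖ ≤ (‖t‖ / a 0) ^ N * (Q ^ N) ^ l.length / mb := by
    intro l t mb hmb hmb2
    rw [hfF_norm, htc_norm]
    have h1 : ‖t‖ * c l ≤ ‖t‖ * (Q ^ l.length / a 0) :=
      mul_le_mul_of_nonneg_left (hc_le l) (norm_nonneg t)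
    have h2 : (‖t‖ * (Q ^ l.length / a 0)) ^ N = (‖t‖ / a 0) ^ N * (Q ^ N) ^ l.length := by
      rw [mul_pow, div_pow, div_pow, hpowQ]
      ring
    calc (‖t‖ * c l) ^ N / ‖(1 - t * (c l:ℂ))‖
        ≤ (‖t‖ * (Q ^ l.length / a 0)) ^ N / mb :=
          div_le_div₀ (pow_nonneg (mul_nonneg (norm_nonneg t)
              (div_nonneg (pow_nonneg hQ0 _) ha0.le)) N)
            (pow_le_pow_left₀ (mul_nonneg (norm_nonneg t) (hc_pos l).le) h1 N) hmb hmb2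
      _ = (‖t‖ / a 0) ^ N * (Q ^ N) ^ l.length / mb := by rw [h2]
  have hF_diff : DifferentiableOn ℂ Fq U := by
    intro z hz
    apply DifferentiableAt.differentiableWithinAt
    obtain ⟨εz, hεz_pos, hεz⟩ : ∃ εz : ℝ, 0 < εz ∧ Metric.closedBall z εz ⊆ U := by
      obtain ⟨ε1, hε1, hb⟩ := Metric.isOpen_iff.1 hU_open z hz
      exact ⟨ε1/2, by linarith, (Metric.closedBall_subset_ball (by linarith)).trans hb⟩
    obtain ⟨mb, hmb_pos, hmb⟩ := hmin _ (isCompact_closedBall z εz) hεz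
    have hdiff_tsum : DifferentiableOn ℂ (fun t => ∑' l : List (Fin k'), fF l t)
        (Metric.ball z εz) := by
      apply differentiableOn_tsum_of_summable_norm
        (u := fun l : List (Fin k') => ((‖z‖ + εz) / a 0) ^ N * (Q ^ N) ^ l.length / mb)
      · exact (hQN_sum.mul_left _).div_const _
      · intro l
        simp only [hfF_def]
        apply DifferentiableOn.const_mul
        apply DifferentiableOn.div
        · exact ((differentiable_id.mul_const ((c l : ℝ):ℂ)).pow N).differentiableOn
        · exact ((differentiable_const (1:ℂ)).sub
            (differentiable_id.mul_const ((c l : ℝ):ℂ))).differentiableOn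
        · intro t htb
          exact hden t (hεz (Metric.ball_subset_closedBall htb)) (c l) (hc_pos l)
            (le_trans (hc0_mul1 l) (by norm_num))
      · exact Metric.isOpen_ball
      · intro l w hw
        have hwK : w ∈ Metric.closedBall z εz := Metric.ball_subset_closedBall hw
        have hb := hmb w hwK (c l) (hc_pos l).le (le_trans (hc0_mul1 l) (by norm_num))
        refine le_trans (hfF_bound l w mb hmb_pos hb) ?_
        have hwn : ‖w‖ ≤ ‖z‖ + εz := by
          have h1 : dist w z ≤ εz := Metric.mem_closedBall.1 hwK
          rw [dist_eq_norm] at h1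
          calc ‖w‖ = ‖z + (w - z)‖ := by rw [add_sub_cancel]
            _ ≤ ‖z‖ + ‖w - z‖ := norm_add_le _ _
            _ ≤ ‖z‖ + εz := by linarith
        gcongr
    have h1 : DifferentiableAt ℂ (fun t => ∑' l : List (Fin k'), fF l t) z :=
      hdiff_tsum.differentiableAt
        (Metric.isOpen_ball.mem_nhds (Metric.mem_ball_self hεz_pos))
    have h2 : DifferentiableAt ℂ (fun t : ℂ => ∑ n ∈ Finset.range N, t ^ n / (m n : ℂ)) z := by
      apply DifferentiableAt.fun_sum
      intro n _
      exact (differentiableAt_pow n).div_const _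
    simp only [hFq_def]
    exact h2.add h1
  have hG_diff : DifferentiableOn ℂ Gq U := by
    simp only [hGq_def]
    apply DifferentiableOn.fun_sum
    intro i _
    apply DifferentiableOn.inv
    · exact ((differentiable_const (1:ℂ)).sub
        (differentiable_id.mul_const ((a i : ℝ):ℂ))).differentiableOn
    · intro t ht
      exact hden t ht (a i) (ha_pos i) (le_trans (hc0_mul2 i) (by norm_num))
  have hGt : ∀ t : ℂ, ‖t‖ < c0 → Gq t = ∑' n : ℕ, (m n : ℂ) * t ^ n := by
    intro t ht
    have hgeom : ∀ i : Fin (k' + 1), ‖(a i : ℂ) * t‖ < 1 := by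
      intro i
      rw [norm_mul, Complex.norm_real, Real.norm_eq_abs, _root_.abs_of_nonneg (ha_pos i).le]
      calc a i * ‖t‖ ≤ a i * c0 := mul_le_mul_of_nonneg_left ht.le (ha_pos i).le
        _ ≤ 1/2 := hc0_mul2 i
        _ < 1 := by norm_num
    have hsummand : ∀ i : Fin (k' + 1), Summable (fun n : ℕ => ((a i : ℂ) * t) ^ n) :=
      fun i => summable_geometric_of_norm_lt_one (hgeom i)
    have h1 : ∀ n : ℕ, (m n : ℂ) * t ^ n = ∑ i : Fin (k' + 1), ((a i:ℂ) * t) ^ n := by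
      intro n
      simp only [hm_def]
      push_cast
      rw [Finset.sum_mul]
      apply Finset.sum_congr rfl
      intro i _
      rw [mul_pow]
    rw [tsum_congr h1, Summable.tsum_finsetSum (fun i _ => hsummand i)]
    simp only [hGq_def]
    apply Finset.sum_congr rfl
    intro i _
    rw [tsum_geometric_of_norm_lt_one (hgeom i), mul_comm]
  have hFt : ∀ t : ℂ, ‖t‖ < c0 → Fq t = ∑' n : ℕ, t ^ n / (m n : ℂ) := by
    intro t ht
    have ht2 : ‖t‖ < a 0 := lt_of_lt_of_le ht (le_trans hc0a (by linarith))
    have htc : ∀ l : List (Fin k'), ‖t * (c l : ℂ)‖ ≤ (1/2) * Q ^ l.length := by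
      intro l
      rw [htc_norm]
      calc ‖t‖ * c l ≤ (a 0 / 2) * (Q ^ l.length / a 0) :=
            mul_le_mul (le_of_lt (lt_of_lt_of_le ht hc0a)) (hc_le l) (hc_pos l).le
              (by positivity)
        _ = (1/2) * Q ^ l.length := by field_simp
    have htc1 : ∀ l : List (Fin k'), ‖t * (c l : ℂ)‖ ≤ 1/2 := by
      intro l
      refine le_trans (htc l) ?_
      have h1 : Q ^ l.length ≤ 1 := pow_le_one₀ hQ0 hQ1.le
      linarith
    have htclt : ∀ l : List (Fin k'), ‖t * (c l : ℂ)‖ < 1 := fun l =>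
      lt_of_le_of_lt (htc1 l) (by norm_num)
    have key : ∀ n : ℕ, N ≤ n →
        t ^ n / (m n : ℂ)
          = ∑' l : List (Fin k'), (-1 : ℂ) ^ l.length * (t * (c l : ℂ)) ^ n := by
      intro n hn
      have habsz : ∑ i : Fin k', |(-(r i ^ n))| < 1 := by
        have heq : ∀ i : Fin k', |(-(r i ^ n))| = r i ^ n := fun i => by
          rw [abs_neg, _root_.abs_of_nonneg (pow_nonneg (hr_pos i).le n)]
        rw [Finset.sum_congr rfl fun i _ => heq i]
        have h1 := lt_of_le_of_lt (hS_le n) (hQpow n hn)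
        rw [hS_def] at h1
        linarith
      have hreal := aux_tsum_listProd (fun i => -(r i ^ n)) habsz
      have hz_sum : (1 : ℝ) - ∑ i : Fin k', -(r i ^ n) = 1 + S n := by
        rw [hS_def]
        simp
      have hw_eq : ∀ l : List (Fin k'), (l.map (fun i => -(r i ^ n))).prod
          = (-1:ℝ) ^ l.length * (p l) ^ n := by
        intro l
        have h1 := aux_listProd_map_neg (fun j : Fin k' => r j ^ n) l
        have h2 := aux_listProd_map_pow r n l
        simp only [hp_def]
        rw [h2] at h1
        exact h1
      have hreal2 : ((1 + S n : ℝ))⁻¹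
          = ∑' l : List (Fin k'), (l.map (fun i => -(r i ^ n))).prod := by
        rw [hreal]
        congr 1
        simp only [hS_def, Finset.sum_neg_distrib]
        ring
      have hC : ((1 + S n : ℝ) : ℂ)⁻¹
          = ∑' l : List (Fin k'), ((-1:ℂ)) ^ l.length * ((p l : ℝ) : ℂ) ^ n := by
        rw [← Complex.ofReal_inv, hreal2, Complex.ofReal_tsum]
        apply tsum_congr
        intro l
        rw [hw_eq l]
        push_cast
        ring
      have hmn : (m n : ℂ) = ((a 0 : ℝ) : ℂ) ^ n * ((1 + S n : ℝ) : ℂ) := by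
        rw [hmS n]
        push_cast
        ring
      have ha0C : ((a 0 : ℝ) : ℂ) ≠ 0 := by exact_mod_cast ha0'
      rw [hmn, div_eq_mul_inv, mul_inv, ← mul_assoc, hC, ← tsum_mul_left]
      apply tsum_congr
      intro l
      have hcl : ((c l : ℝ) : ℂ) = ((p l : ℝ) : ℂ) / ((a 0 : ℝ) : ℂ) := by
        simp only [hc_def]
        push_cast
        ring
      rw [hcl, mul_pow, div_pow]
      field_simp
    have hg : Summable (fun q : List (Fin k') × ℕ =>
        (-1:ℂ) ^ q.1.length * (t * (c q.1 : ℂ)) ^ (q.2 + N)) := by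
      apply Summable.of_norm
      apply Summable.of_nonneg_of_le (fun q => norm_nonneg _) ?_
        (Summable.mul_of_nonneg ((hQN_sum.mul_left ((1/2:ℝ)^N)))
          (summable_geometric_of_lt_one (by norm_num) (by norm_num : (1:ℝ)/2 < 1))
          (fun l => by positivity) (fun n => by positivity))
      intro q
      rw [norm_mul, norm_pow, norm_neg, norm_one, one_pow, one_mul, norm_pow, pow_add]
      calc ‖t * (c q.1:ℂ)‖ ^ q.2 * ‖t * (c q.1:ℂ)‖ ^ N
          ≤ (1/2) ^ q.2 * ((1/2) * Q ^ q.1.length) ^ N :=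
            mul_le_mul (pow_le_pow_left₀ (norm_nonneg _) (htc1 q.1) q.2)
              (pow_le_pow_left₀ (norm_nonneg _) (htc q.1) N) (by positivity) (by positivity)
        _ = (1/2:ℝ)^N * (Q ^ N) ^ q.1.length * (1/2) ^ q.2 := by
            rw [mul_pow, hpowQ]
            ring
    have hstep1 : ∑' n : ℕ, t ^ n / (m n : ℂ)
        = (∑ n ∈ Finset.range N, t ^ n / (m n : ℂ))
          + ∑' n : ℕ, t ^ (n + N) / (m (n + N) : ℂ) :=
      (Summable.sum_add_tsum_nat_add N (hsum1 t ht2)).symm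
    have hstep2 : ∑' n : ℕ, t ^ (n + N) / (m (n + N) : ℂ)
        = ∑' n : ℕ, ∑' l : List (Fin k'), (-1:ℂ) ^ l.length * (t * (c l:ℂ)) ^ (n + N) :=
      tsum_congr fun n => key (n + N) (Nat.le_add_left N n)
    have hstep3 : ∑' n : ℕ, ∑' l : List (Fin k'), (-1:ℂ) ^ l.length * (t * (c l:ℂ)) ^ (n + N)
        = ∑' l : List (Fin k'), ∑' n : ℕ, (-1:ℂ) ^ l.length * (t * (c l:ℂ)) ^ (n + N) :=
      Summable.tsum_comm hg
    have hstep4 : ∀ l : List (Fin k'),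
        ∑' n : ℕ, (-1:ℂ) ^ l.length * (t * (c l:ℂ)) ^ (n + N) = fF l t := by
      intro l
      have heq : ∀ n : ℕ, (-1:ℂ) ^ l.length * (t * (c l:ℂ)) ^ (n + N)
          = ((-1:ℂ) ^ l.length * (t * (c l:ℂ)) ^ N) * (t * (c l:ℂ)) ^ n := by
        intro n
        rw [pow_add]
        ring
      rw [tsum_congr heq, tsum_mul_left, tsum_geometric_of_norm_lt_one (htclt l)]
      simp only [hfF_def, div_eq_mul_inv]
      ring
    simp only [hFq_def]
    rw [hstep1, hstep2, hstep3, tsum_congr hstep4]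
  set A0 : ℝ := (∑ n ∈ Finset.range N, 1 / m n) + SQ / (a 0 ^ N * mS)
    + ((k':ℝ) + 1) / mS + 1 with hA0_def
  have hA0_1 : 0 ≤ ∑ n ∈ Finset.range N, 1 / m n :=
    Finset.sum_nonneg fun n _ => le_of_lt (div_pos one_pos (hm_pos n))
  have hA0_2 : 0 ≤ SQ / (a 0 ^ N * mS) :=
    div_nonneg hSQ_nonneg (mul_nonneg (by positivity) hmS_pos.le)
  have hA0_3 : 0 ≤ ((k':ℝ) + 1) / mS := div_nonneg (by positivity) hmS_pos.le
  have hA0_pos : 0 < A0 := by rw [hA0_def]; linarith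
  have hone_le : ∀ t : ℂ, (1:ℝ) ≤ (1 + ‖t‖) ^ N := by
    intro t
    have h1 : (1:ℝ)^N ≤ (1 + ‖t‖) ^ N :=
      pow_le_pow_left₀ zero_le_one (by linarith [norm_nonneg t]) N
    simpa using h1
  have hF_bound : ∀ t ∈ DiscSector θ α c0, ‖(Fq t)‖ ≤ A0 * (1 + ‖t‖) ^ N := by
    intro t ht
    have hX1 : (1:ℝ) ≤ 1 + ‖t‖ := by linarith [norm_nonneg t]
    have hXpos : (0:ℝ) ≤ (1 + ‖t‖) ^ N := by positivity
    have hsummnorm : Summable (fun l : List (Fin k') => ‖fF l t‖) := by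
      apply Summable.of_nonneg_of_le (fun l => norm_nonneg _) ?_
        (hQN_sum.mul_left ((‖t‖ / a 0) ^ N / mS))
      intro l
      refine le_trans (hfF_bound l t mS hmS_pos
        (hDS_lb t ht (c l) (hc_pos l).le (hc0_mul1 l))) (le_of_eq ?_)
      ring
    have h1 : ‖(Fq t)‖ ≤ (∑ n ∈ Finset.range N, ‖t ^ n / (m n : ℂ)‖)
        + ∑' l : List (Fin k'), ‖fF l t‖ := by
      rw [hFq_def]
      refine le_trans (norm_add_le _ _) ?_
      exact add_le_add (norm_sum_le _ _) (norm_tsum_le_tsum_norm hsummnorm)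
    have h2 : ∀ n ∈ Finset.range N, ‖t ^ n / (m n : ℂ)‖ ≤ (1/m n) * (1 + ‖t‖) ^ N := by
      intro n hn
      rw [norm_div, norm_pow, Complex.norm_real, Real.norm_eq_abs,
        _root_.abs_of_nonneg (hm_pos n).le]
      have h3 : ‖t‖ ^ n ≤ (1 + ‖t‖) ^ N :=
        le_trans (pow_le_pow_left₀ (norm_nonneg t) (by linarith) n)
          (pow_le_pow_right₀ hX1 (le_of_lt (Finset.mem_range.1 hn)))
      calc ‖t‖ ^ n / m n ≤ (1 + ‖t‖)^N / m n := (div_le_div_iff_of_pos_right (hm_pos n)).2 h3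
        _ = 1/m n * (1 + ‖t‖)^N := by ring
    have h3 : ∑ n ∈ Finset.range N, ‖t ^ n / (m n : ℂ)‖
        ≤ (∑ n ∈ Finset.range N, 1 / m n) * (1 + ‖t‖) ^ N := by
      calc ∑ n ∈ Finset.range N, ‖t ^ n / (m n : ℂ)‖
          ≤ ∑ n ∈ Finset.range N, (1/m n) * (1 + ‖t‖) ^ N := Finset.sum_le_sum h2
        _ = (∑ n ∈ Finset.range N, 1 / m n) * (1 + ‖t‖) ^ N := by rw [← Finset.sum_mul]
    have h4 : ∑' l : List (Fin k'), ‖fF l t‖ ≤ (SQ / (a 0 ^ N * mS)) * (1 + ‖t‖) ^ N := by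
      have hb1 : ∑' l : List (Fin k'), ‖fF l t‖
          ≤ ∑' l : List (Fin k'), ((‖t‖ / a 0) ^ N / mS) * (Q ^ N) ^ l.length := by
        apply Summable.tsum_le_tsum ?_ hsummnorm (hQN_sum.mul_left _)
        intro l
        refine le_trans (hfF_bound l t mS hmS_pos
          (hDS_lb t ht (c l) (hc_pos l).le (hc0_mul1 l))) (le_of_eq ?_)
        ring
      rw [tsum_mul_left] at hb1
      refine le_trans hb1 ?_
      have h5 : (‖t‖ / a 0) ^ N / mS * SQ = SQ / (a 0 ^ N * mS) * ‖t‖ ^ N := by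
        rw [div_pow]
        field_simp
      rw [h5]
      apply mul_le_mul_of_nonneg_left ?_ hA0_2
      exact le_trans (pow_le_pow_left₀ (norm_nonneg t) (by linarith) N) le_rfl
    calc ‖(Fq t)‖
        ≤ (∑ n ∈ Finset.range N, ‖t ^ n / (m n : ℂ)‖) + ∑' l : List (Fin k'), ‖fF l t‖ := h1
      _ ≤ (∑ n ∈ Finset.range N, 1 / m n) * (1 + ‖t‖) ^ N
          + (SQ/(a 0 ^ N * mS)) * (1 + ‖t‖) ^ N := add_le_add h3 h4
      _ = ((∑ n ∈ Finset.range N, 1 / m n) + SQ/(a 0 ^ N * mS)) * (1 + ‖t‖) ^ N := by ring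
      _ ≤ A0 * (1 + ‖t‖) ^ N := by
          apply mul_le_mul_of_nonneg_right ?_ hXpos
          rw [hA0_def]
          linarith
  have hG_bound : ∀ t ∈ DiscSector θ α c0, ‖(Gq t)‖ ≤ A0 * (1 + ‖t‖) ^ N := by
    intro t ht
    have h1 : ‖(Gq t)‖ ≤ ∑ i : Fin (k' + 1), ‖(1 - t * (a i:ℂ))⁻¹‖ := by
      rw [hGq_def]
      exact norm_sum_le _ _
    have h2 : ∀ i : Fin (k' + 1), ‖(1 - t * (a i:ℂ))⁻¹‖ ≤ 1/mS := by
      intro i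
      rw [norm_inv, one_div]
      exact inv_anti₀ hmS_pos (hDS_lb t ht (a i) (ha_pos i).le (hc0_mul2 i))
    calc ‖(Gq t)‖ ≤ ∑ _i : Fin (k' + 1), 1/mS :=
          le_trans h1 (Finset.sum_le_sum fun i _ => h2 i)
      _ = ((k':ℝ)+1) / mS := by
          rw [Finset.sum_const, Finset.card_univ, Fintype.card_fin, nsmul_eq_mul]
          push_cast
          ring
      _ ≤ A0 := by rw [hA0_def]; linarith
      _ ≤ A0 * (1 + ‖t‖)^N := le_mul_of_one_le_right hA0_pos.le (hone_le t)
  set Mexp : ℕ := ⌈(N:ℝ)/kk⌉₊ + 1 with hM_def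
  have hM_pos : (0:ℝ) < (Mexp:ℝ) := by
    rw [hM_def]
    push_cast
    positivity
  have hMk : (N:ℝ) ≤ kk * (Mexp:ℝ) := by
    have h1 : (N:ℝ)/kk ≤ (⌈(N:ℝ)/kk⌉₊ : ℝ) := Nat.le_ceil _
    have h2 : (N:ℝ)/kk ≤ (Mexp:ℝ) := by
      rw [hM_def]
      push_cast
      linarith
    calc (N:ℝ) = kk * ((N:ℝ)/kk) := by field_simp
      _ ≤ kk * (Mexp:ℝ) := mul_le_mul_of_nonneg_left h2 hkk.le
  have hpoly : ∀ y : ℝ, 0 ≤ y → (1+y)^N ≤ 2^N * Real.exp ((Mexp:ℝ) * y ^ kk) := by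
    intro y hy
    have hyk : 0 ≤ y ^ kk := Real.rpow_nonneg hy kk
    have hexp_ge1 : 1 ≤ Real.exp ((Mexp:ℝ) * y ^ kk) :=
      Real.one_le_exp (mul_nonneg hM_pos.le hyk)
    rcases le_total y 1 with hy1 | hy1
    · calc (1 + y) ^ N ≤ 2 ^ N := pow_le_pow_left₀ (by linarith) (by linarith) N
        _ ≤ 2 ^ N * Real.exp ((Mexp:ℝ) * y ^ kk) :=
            le_mul_of_one_le_right (by positivity) hexp_ge1
    · have h2 : (1 + y) ^ N ≤ (2 * y) ^ N := pow_le_pow_left₀ (by linarith) (by linarith) N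
      have h3 : y ^ N ≤ Real.exp ((Mexp:ℝ) * y ^ kk) := by
        have h4 : (y:ℝ)^(N:ℕ) = y ^ ((N:ℕ):ℝ) := (Real.rpow_natCast y N).symm
        have h5 : y ^ ((N:ℕ):ℝ) ≤ y ^ (kk * (Mexp:ℝ)) :=
          Real.rpow_le_rpow_of_exponent_le hy1 hMk
        have h6 : y ^ (kk * (Mexp:ℝ)) = (y ^ kk) ^ (Mexp:ℕ) := by
          rw [Real.rpow_mul hy, Real.rpow_natCast]
        have h7 : (y ^ kk) ^ (Mexp:ℕ) ≤ (Real.exp (y^kk)) ^ (Mexp:ℕ) :=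
          pow_le_pow_left₀ hyk (by linarith [Real.add_one_le_exp (y ^ kk)]) _
        have h8 : (Real.exp (y^kk))^(Mexp:ℕ) = Real.exp ((Mexp:ℝ) * (y^kk)) := by
          rw [← Real.exp_nat_mul]
        rw [h4]
        rw [h6] at h5
        rw [h8] at h7
        linarith
      calc (1 + y) ^ N ≤ (2*y)^N := h2
        _ = 2^N * y^N := mul_pow 2 y N
        _ ≤ 2^N * Real.exp ((Mexp:ℝ) * y ^ kk) :=
            mul_le_mul_of_nonneg_left h3 (by positivity)
  refine ⟨α, hα_pos, c0, hc0_pos, U, hU_open, hDSU, Fq, Gq, hF_diff, hG_diff,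
    ⟨c0, hc0_pos, fun t htn => ⟨hFt t htn, hGt t htn⟩⟩,
    A0 * 2 ^ N, (Mexp:ℝ), mul_pos hA0_pos (by positivity), hM_pos, ?_⟩
  intro t ht
  have hpe := hpoly ‖t‖ (norm_nonneg t)
  constructor
  · calc ‖(Fq t)‖ ≤ A0 * (1+‖t‖)^N := hF_bound t ht
      _ ≤ A0 * (2^N * Real.exp ((Mexp:ℝ) * ‖t‖ ^ kk)) :=
          mul_le_mul_of_nonneg_left hpe hA0_pos.le
      _ = A0 * 2^N * Real.exp ((Mexp:ℝ) * ‖t‖ ^ kk) := by ring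
  · calc ‖(Gq t)‖ ≤ A0 * (1+‖t‖)^N := hG_bound t ht
      _ ≤ A0 * (2^N * Real.exp ((Mexp:ℝ) * ‖t‖ ^ kk)) :=
          mul_le_mul_of_nonneg_left hpe hA0_pos.le
      _ = A0 * 2^N * Real.exp ((Mexp:ℝ) * ‖t‖ ^ kk) := by ring
end
end

section
/- Let p ∈ ℕ with p ≥ 1 and let w(x) = a_p(x+1)^p + a_{p−1}(x+1)^{p−1} + … + a₁(x+1) + a₀ be a polynomial with complex coefficients, and set A = |a₀| + |a₁| + … + |a_p|. Then for every k ∈ ℕ the power series f(z) = Σ_{n≥0} w(n)^k·zⁿ converges on the unit disc D₁ and its sum extends to a holomorphic function on ℂ \ [1,∞); moreover, for every θ ≢ 0 (mod 2π), sup_{z ∈ L_θ} |f(z)| ≤ A^k·((kp)!)² / C(θ)^{kp+1}. -/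
open Complex MeasureTheory

noncomputable section

section AuxPoly

open Finset


def ccc : ℕ → ℕ → ℕ
  | 0, 0 => 1
  | 0, _+1 => 0
  | m+1, j => j * (ccc m j + ccc m (j-1))

lemma ccc_eq_zero : ∀ m j, m < j → ccc m j = 0
  | 0, _+1, _ => rfl
  | m+1, j, h => by
    cases j with
    | zero => omega
    | succ i =>
      have h1 : ccc m (i+1) = 0 := ccc_eq_zero m (i+1) (by omega)
      have h2 : ccc m i = 0 := ccc_eq_zero m i (by omega)
      simp [ccc, h1, h2]

lemma ccc_sum_le (m : ℕ) : (∑ j ∈ range (m+1), ccc m j) ≤ m.factorial ^ 2 := by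
  induction m with
  | zero => simp [ccc]
  | succ m ih =>
    rcases Nat.eq_zero_or_pos m with rfl | hm
    · decide
    have key : (∑ j ∈ range (m+2), ccc (m+1) j) ≤ 2 * (m+1) * ∑ j ∈ range (m+1), ccc m j := by
      have h1 : (∑ j ∈ range (m+2), j * ccc m j) ≤ (m+1) * ∑ j ∈ range (m+1), ccc m j := by
        rw [Finset.sum_range_succ, ccc_eq_zero m (m+1) (by omega)]
        simp only [Nat.mul_zero, Nat.add_zero]
        calc (∑ j ∈ range (m+1), j * ccc m j) ≤ ∑ j ∈ range (m+1), (m+1) * ccc m j := by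
              apply Finset.sum_le_sum; intro i hi
              exact Nat.mul_le_mul_right _ (by simp at hi; omega)
          _ = (m+1) * ∑ j ∈ range (m+1), ccc m j := by rw [Finset.mul_sum]
      have h2 : (∑ j ∈ range (m+2), j * ccc m (j-1)) ≤ (m+1) * ∑ j ∈ range (m+1), ccc m j := by
        rw [Finset.sum_range_succ']
        simp only [Nat.add_sub_cancel, Nat.zero_mul, Nat.add_zero]
        calc (∑ i ∈ range (m+1), (i+1) * ccc m i) ≤ ∑ i ∈ range (m+1), (m+1) * ccc m i := by
              apply Finset.sum_le_sum; intro i hi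
              exact Nat.mul_le_mul_right _ (by simp at hi; omega)
          _ = (m+1) * ∑ j ∈ range (m+1), ccc m j := by rw [Finset.mul_sum]
      calc (∑ j ∈ range (m+2), ccc (m+1) j)
          = ∑ j ∈ range (m+2), (j * ccc m j + j * ccc m (j-1)) := by
            apply Finset.sum_congr rfl; intro j _; simp [ccc, Nat.mul_add]
        _ = (∑ j ∈ range (m+2), j * ccc m j) + ∑ j ∈ range (m+2), j * ccc m (j-1) :=
            Finset.sum_add_distrib
        _ ≤ (m+1) * (∑ j ∈ range (m+1), ccc m j) + (m+1) * ∑ j ∈ range (m+1), ccc m j :=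
            Nat.add_le_add h1 h2
        _ = 2 * (m+1) * ∑ j ∈ range (m+1), ccc m j := by ring
    calc (∑ j ∈ range (m+2), ccc (m+1) j) ≤ 2 * (m+1) * ∑ j ∈ range (m+1), ccc m j := key
      _ ≤ 2 * (m+1) * m.factorial ^ 2 := Nat.mul_le_mul_left _ ih
      _ ≤ (m+1).factorial ^ 2 := by
          rw [Nat.factorial_succ, Nat.mul_pow]
          have h : 2 * (m+1) ≤ (m+1)^2 := by nlinarith
          exact Nat.mul_le_mul h (le_refl _)

lemma worpitzky (m n : ℕ) :
    ((n:ℂ)+1)^m = ∑ j ∈ range (m+1), (ccc m j : ℂ) * ((n+1).choose j : ℂ) := by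
  induction m with
  | zero => simp [ccc]
  | succ m ih =>
    have absorb : ∀ j : ℕ, ((n:ℂ)+1) * ((n+1).choose j : ℂ) =
        ((j:ℂ)+1) * ((n+1).choose (j+1) : ℂ) + (j:ℂ) * ((n+1).choose j : ℂ) := by
      intro j
      have h := Nat.choose_succ_right_eq (n+1) j
      rcases le_or_gt j (n+1) with hj | hj
      · have hcast : ((n+1).choose (j+1) : ℂ) * ((j:ℂ)+1) =
            ((n+1).choose j : ℂ) * ((n:ℂ)+1-j) := by
          have h2 := congrArg (Nat.cast (R := ℂ)) h
          push_cast [Nat.cast_sub hj] at h2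
          linear_combination h2
        linear_combination -hcast
      · have h1 : (n+1).choose j = 0 := Nat.choose_eq_zero_of_lt hj
        have h2 : (n+1).choose (j+1) = 0 := Nat.choose_eq_zero_of_lt (by omega)
        simp [h1, h2]
    calc ((n:ℂ)+1)^(m+1) = ((n:ℂ)+1) * ((n:ℂ)+1)^m := by ring
      _ = ∑ j ∈ range (m+1), (ccc m j : ℂ) *
            (((j:ℂ)+1) * ((n+1).choose (j+1) : ℂ) + (j:ℂ) * ((n+1).choose j : ℂ)) := by
          rw [ih, Finset.mul_sum]
          exact Finset.sum_congr rfl fun j _ => by rw [← absorb j]; ring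
      _ = (∑ j ∈ range (m+1), (ccc m j : ℂ) * ((j:ℂ)+1) * ((n+1).choose (j+1) : ℂ))
          + ∑ j ∈ range (m+1), (ccc m j : ℂ) * (j:ℂ) * ((n+1).choose j : ℂ) := by
          rw [← Finset.sum_add_distrib]
          exact Finset.sum_congr rfl fun j _ => by ring
      _ = ∑ j ∈ range (m+2), (ccc (m+1) j : ℂ) * ((n+1).choose j : ℂ) := by
          have e1 : ∀ j ∈ range (m+2), (ccc (m+1) j : ℂ) * ((n+1).choose j : ℂ)
              = (j:ℂ) * (ccc m j : ℂ) * ((n+1).choose j : ℂ)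
                + (j:ℂ) * (ccc m (j-1) : ℂ) * ((n+1).choose j : ℂ) := by
            intro j _
            show ((j * (ccc m j + ccc m (j-1)) : ℕ) : ℂ) * _ = _
            push_cast; ring
          have hX : ∑ j ∈ range (m+2), (j:ℂ) * (ccc m j :ℂ) * ((n+1).choose j :ℂ)
              = ∑ j ∈ range (m+1), (ccc m j :ℂ) * (j:ℂ) * ((n+1).choose j :ℂ) := by
            rw [Finset.sum_range_succ, ccc_eq_zero m (m+1) (by omega)]
            simp only [Nat.cast_zero, mul_zero, zero_mul, add_zero]
            exact Finset.sum_congr rfl fun j _ => by ring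
          have hY : ∑ j ∈ range (m+2), (j:ℂ) * (ccc m (j-1) :ℂ) * ((n+1).choose j :ℂ)
              = ∑ j ∈ range (m+1), (ccc m j :ℂ) * ((j:ℂ)+1) * ((n+1).choose (j+1) :ℂ) := by
            rw [Finset.sum_range_succ']
            simp only [Nat.add_sub_cancel, Nat.cast_zero, zero_mul, add_zero, Nat.cast_ofNat]
            exact Finset.sum_congr rfl fun j _ => by push_cast; ring
          rw [Finset.sum_congr rfl e1, Finset.sum_add_distrib, hX, hY]
          exact add_comm _ _

lemma summable_choose_mul {z : ℂ} (hz : ‖z‖ < 1) (j : ℕ) :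
    Summable (fun n : ℕ => (n.choose j : ℂ) * z ^ n) := by
  have hr : ‖(‖z‖ : ℝ)‖ < 1 := by rwa [Real.norm_eq_abs, _root_.abs_of_nonneg (norm_nonneg z)]
  refine Summable.of_norm_bounded (summable_pow_mul_geometric_of_norm_lt_one j hr) ?_
  intro n
  rw [norm_mul, norm_pow, Complex.norm_natCast]
  apply mul_le_mul_of_nonneg_right _ (pow_nonneg (norm_nonneg z) n)
  exact_mod_cast Nat.choose_le_pow n j

lemma one_sub_ne_zero {z : ℂ} (hz : ‖z‖ < 1) : (1 : ℂ) - z ≠ 0 := by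
  intro h
  have : z = 1 := by linear_combination -h
  rw [this] at hz; simp at hz

lemma hasSum_choose_mul (j : ℕ) {z : ℂ} (hz : ‖z‖ < 1) :
    HasSum (fun n : ℕ => (n.choose j : ℂ) * z ^ n) (z ^ j * ((1 - z)⁻¹) ^ (j + 1)) := by
  induction j with
  | zero => simpa using hasSum_geometric_of_norm_lt_one hz
  | succ j ih =>
    have hz1 : (1 : ℂ) - z ≠ 0 := one_sub_ne_zero hz
    obtain ⟨T, hT⟩ := summable_choose_mul hz (j + 1)
    have hshift : HasSum (fun n : ℕ => ((n + 1).choose (j + 1) : ℂ) * z ^ (n + 1))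
        (T - ∑ i ∈ Finset.range 1, (i.choose (j + 1) : ℂ) * z ^ i) :=
      (hasSum_nat_add_iff' 1).mpr hT
    have hzero : (∑ i ∈ Finset.range 1, (i.choose (j + 1) : ℂ) * z ^ i) = 0 := by simp
    rw [hzero, sub_zero] at hshift
    have heq : (fun n : ℕ => z * ((n.choose j : ℂ) * z ^ n) + z * ((n.choose (j + 1) : ℂ) * z ^ n))
        = fun n : ℕ => ((n + 1).choose (j + 1) : ℂ) * z ^ (n + 1) := by
      funext n; rw [Nat.choose_succ_succ]; push_cast; ring
    have h2 : HasSum (fun n : ℕ => ((n + 1).choose (j + 1) : ℂ) * z ^ (n + 1))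
        (z * (z ^ j * ((1 - z)⁻¹) ^ (j + 1)) + z * T) :=
      heq ▸ ((ih.mul_left z).add (hT.mul_left z))
    have hTeq : T = z * (z ^ j * ((1 - z)⁻¹) ^ (j + 1)) + z * T := hshift.unique h2
    have hval : T = z ^ (j + 1) * ((1 - z)⁻¹) ^ (j + 2) := by
      have h3 : T * (1 - z) = z ^ (j + 1) * ((1 - z)⁻¹) ^ (j + 1) := by
        linear_combination hTeq
      rw [pow_succ ((1 - z)⁻¹) (j + 1), eq_div_of_mul_eq hz1 h3, div_eq_mul_inv]
      ring
    exact hval ▸ hT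

lemma hasSum_choose_succ_mul (j : ℕ) {z : ℂ} (hz : ‖z‖ < 1) :
    HasSum (fun n : ℕ => ((n + 1).choose j : ℂ) * z ^ n)
      (z ^ (j - 1) * ((1 - z)⁻¹) ^ (j + 1)) := by
  cases j with
  | zero => simpa using hasSum_geometric_of_norm_lt_one hz
  | succ j =>
    have hz1 : (1 : ℂ) - z ≠ 0 := one_sub_ne_zero hz
    have h := (hasSum_choose_mul j hz).add (hasSum_choose_mul (j + 1) hz)
    have heq : (fun n : ℕ => (n.choose j : ℂ) * z ^ n + (n.choose (j + 1) : ℂ) * z ^ n)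
        = fun n : ℕ => ((n + 1).choose (j + 1) : ℂ) * z ^ n := by
      funext n; rw [Nat.choose_succ_succ]; push_cast; ring
    have hval : z ^ j * ((1 - z)⁻¹) ^ (j + 1) + z ^ (j + 1) * ((1 - z)⁻¹) ^ (j + 2)
        = z ^ (j + 1 - 1) * ((1 - z)⁻¹) ^ (j + 1 + 1) := by
      simp only [Nat.add_sub_cancel]
      have hu : (1 - z)⁻¹ * (1 - z) = 1 := inv_mul_cancel₀ hz1
      linear_combination (-(z ^ j * ((1 - z)⁻¹) ^ (j + 1))) * hu
    exact hval ▸ heq ▸ h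

lemma hasSum_pow_succ_mul (m : ℕ) {z : ℂ} (hz : ‖z‖ < 1) :
    HasSum (fun n : ℕ => ((n : ℂ) + 1) ^ m * z ^ n)
      (∑ j ∈ range (m + 1), (ccc m j : ℂ) * (z ^ (j - 1) * ((1 - z)⁻¹) ^ (j + 1))) := by
  have H : HasSum (fun n : ℕ => ∑ j ∈ range (m + 1),
        (ccc m j : ℂ) * (((n + 1).choose j : ℂ) * z ^ n))
      (∑ j ∈ range (m + 1), (ccc m j : ℂ) * (z ^ (j - 1) * ((1 - z)⁻¹) ^ (j + 1))) :=
    hasSum_sum fun j _ => (hasSum_choose_succ_mul j hz).mul_left _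
  have heq : (fun n : ℕ => ∑ j ∈ range (m + 1),
      (ccc m j : ℂ) * (((n + 1).choose j : ℂ) * z ^ n))
      = fun n : ℕ => ((n : ℂ) + 1) ^ m * z ^ n := by
    funext n
    rw [worpitzky m n, Finset.sum_mul]
    exact Finset.sum_congr rfl fun j _ => by ring
  exact heq ▸ H

lemma cos_nonpos_aux {θ : ℝ} (hθ : NonzeroDir θ)
    (hP : ¬ ∃ φ : ℝ, φ ∈ Set.Ioo (-(Real.pi / 2)) (Real.pi / 2) ∧ φ ≠ 0 ∧
      ∃ j : ℤ, θ = φ + 2 * Real.pi * (j : ℝ)) :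
    Real.cos θ ≤ 0 := by
  by_contra hc
  push_neg at hc
  have hs : Real.sin θ ≠ 0 := by
    intro hs0
    rcases Real.sin_eq_zero_iff_cos_eq.mp hs0 with h1 | h1
    · obtain ⟨n, hn⟩ := (Real.cos_eq_one_iff θ).mp h1
      exact hθ ⟨n, by linarith [hn, mul_comm (n : ℝ) (2 * Real.pi)]⟩
    · linarith
  set φ := toIocMod Real.two_pi_pos (-Real.pi) θ with hφdef
  have hmem : φ ∈ Set.Ioc (-Real.pi) (-Real.pi + 2 * Real.pi) :=
    toIocMod_mem_Ioc Real.two_pi_pos (-Real.pi) θ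
  set j := toIocDiv Real.two_pi_pos (-Real.pi) θ with hjdef
  have hθeq : θ = φ + 2 * Real.pi * (j : ℝ) := by
    have h := toIocMod_add_toIocDiv_zsmul Real.two_pi_pos (-Real.pi) θ
    rw [zsmul_eq_mul] at h
    rw [← hφdef] at h  -- might be defeq already
    linarith [h]
  have hcos : Real.cos φ = Real.cos θ := by
    rw [hθeq, show φ + 2 * Real.pi * (j : ℝ) = φ + (j : ℝ) * (2 * Real.pi) by ring,
      Real.cos_add_int_mul_two_pi]
  have hsin : Real.sin φ = Real.sin θ := by
    rw [hθeq, show φ + 2 * Real.pi * (j : ℝ) = φ + (j : ℝ) * (2 * Real.pi) by ring,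
      Real.sin_add_int_mul_two_pi]
  have hπ : φ ∈ Set.Ioc (-Real.pi) Real.pi := by
    constructor
    · exact hmem.1
    · linarith [hmem.2]
  have hupper : φ < Real.pi / 2 := by
    by_contra h
    push_neg at h
    have := Real.cos_nonpos_of_pi_div_two_le_of_le h
      (by linarith [hπ.2, Real.pi_pos])
    linarith [hcos ▸ this]
  have hlower : -(Real.pi / 2) < φ := by
    by_contra h
    push_neg at h
    have h2 : Real.cos (-φ) ≤ 0 := Real.cos_nonpos_of_pi_div_two_le_of_le
      (by linarith) (by linarith [hπ.1, Real.pi_pos])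
    rw [Real.cos_neg] at h2
    linarith [hcos ▸ h2]
  have hφ0 : φ ≠ 0 := by
    intro h0
    rw [h0] at hsin
    simp at hsin
    exact hs hsin.symm
  exact hP ⟨φ, ⟨hlower, hupper⟩, hφ0, j, hθeq⟩

lemma sin_ne_zero_of_P {θ : ℝ}
    (h : ∃ φ : ℝ, φ ∈ Set.Ioo (-(Real.pi / 2)) (Real.pi / 2) ∧ φ ≠ 0 ∧
      ∃ j : ℤ, θ = φ + 2 * Real.pi * (j : ℝ)) :
    Real.sin θ ≠ 0 ∧ 0 < Real.cos θ := by
  obtain ⟨φ, hmem, hφ0, j, hθeq⟩ := h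
  have hsin : Real.sin θ = Real.sin φ := by
    rw [hθeq, show φ + 2 * Real.pi * (j : ℝ) = φ + (j : ℝ) * (2 * Real.pi) by ring,
      Real.sin_add_int_mul_two_pi]
  have hcos : Real.cos θ = Real.cos φ := by
    rw [hθeq, show φ + 2 * Real.pi * (j : ℝ) = φ + (j : ℝ) * (2 * Real.pi) by ring,
      Real.cos_add_int_mul_two_pi]
  constructor
  · rw [hsin]
    intro h0
    exact hφ0 ((Real.sin_eq_zero_iff_of_lt_of_lt
      (by linarith [hmem.1, Real.pi_pos]) (by linarith [hmem.2, Real.pi_pos])).mp h0)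
  · rw [hcos]
    exact Real.cos_pos_of_mem_Ioo hmem

lemma Cdir_pos (θ : ℝ) : 0 < Cdir θ := by
  rw [Cdir]
  split_ifs with h
  · exact abs_pos.mpr (sin_ne_zero_of_P h).1
  · exact one_pos

lemma Cdir_le_one (θ : ℝ) : Cdir θ ≤ 1 := by
  rw [Cdir]
  split_ifs with h
  · exact abs_le.mpr ⟨Real.neg_one_le_sin θ, Real.sin_le_one θ⟩
  · exact le_refl 1

lemma norm_one_sub_ray {θ ρ : ℝ} (hθ : NonzeroDir θ) (hρ : 0 < ρ) :
    Cdir θ * max 1 ρ ≤ ‖(1 : ℂ) - (ρ : ℂ) * Complex.exp ((θ : ℂ) * Complex.I)‖ := by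
  set z : ℂ := (ρ : ℂ) * Complex.exp ((θ : ℂ) * Complex.I) with hzdef
  set N : ℝ := ‖(1 : ℂ) - z‖ with hNdef
  have hN0 : 0 ≤ N := norm_nonneg _
  have hN2 : N ^ 2 = 1 - 2 * ρ * Real.cos θ + ρ ^ 2 := by
    rw [hNdef, hzdef, ← Complex.normSq_eq_norm_sq]
    simp [Complex.normSq_apply, Complex.exp_mul_I, Complex.mul_re, Complex.mul_im,
      Complex.cos_ofReal_re, Complex.sin_ofReal_re]
    nlinarith [Real.sin_sq_add_cos_sq θ]
  have hCM0 : 0 ≤ Cdir θ * max 1 ρ :=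
    mul_nonneg (Cdir_pos θ).le (le_trans zero_le_one (le_max_left 1 ρ))
  have hsq : (Cdir θ * max 1 ρ) ^ 2 ≤ N ^ 2 := by
    rw [Cdir]
    split_ifs with h
    · obtain ⟨hs, hc⟩ := sin_ne_zero_of_P h
      rcases le_total ρ 1 with h1 | h1
      · rw [max_eq_left h1]
        nlinarith [Real.sin_sq_add_cos_sq θ, sq_nonneg (ρ - Real.cos θ), _root_.sq_abs (Real.sin θ)]
      · rw [max_eq_right h1]
        nlinarith [Real.sin_sq_add_cos_sq θ, sq_nonneg (1 - ρ * Real.cos θ), _root_.sq_abs (Real.sin θ)]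
    · have hc : Real.cos θ ≤ 0 := cos_nonpos_aux hθ h
      rcases le_total ρ 1 with h1 | h1
      · rw [max_eq_left h1]; nlinarith
      · rw [max_eq_right h1]; nlinarith
  nlinarith [hsq, hCM0, hN0]

end AuxPoly

set_option maxHeartbeats 1000000 in
/-- Lemma 1 of the paper: Let `w(x) = a_p(x+1)^p + … + a₁(x+1) + a₀` be a
complex polynomial, `A = |a₀| + … + |a_p|`. Then for every `k ∈ ℕ` the series
`f(z) = Σ w(n)^k zⁿ` converges on the unit disc, extends holomorphically to `ℂ \ [1,∞)`, and
for every `θ ≢ 0 (mod 2π)` its continuation satisfies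
`|f(z)| ≤ A^k ((kp)!)² / C(θ)^{kp+1}` on the ray `L_θ`. -/
theorem polynomial_power_series_bound
    (p : ℕ) (hp : 1 ≤ p) (a : Fin (p + 1) → ℂ)
    (w : ℕ → ℂ) (hw : ∀ n : ℕ, w n = ∑ j : Fin (p + 1), a j * ((n : ℂ) + 1) ^ (j : ℕ))
    (A : ℝ) (hA : A = ∑ j : Fin (p + 1), ‖a j‖)
    (k : ℕ) :
    (∀ z : ℂ, ‖z‖ < 1 → Summable (fun n : ℕ => w n ^ k * z ^ n)) ∧
    ∃ F : ℂ → ℂ, DifferentiableOn ℂ F (SlitGe 1)ᶜ ∧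
      (∀ z : ℂ, ‖z‖ < 1 → F z = ∑' n : ℕ, w n ^ k * z ^ n) ∧
      ∀ θ : ℝ, NonzeroDir θ → ∀ z ∈ Ray θ,
        ‖F z‖ ≤ A ^ k * ((k * p).factorial : ℝ) ^ 2 / Cdir θ ^ (k * p + 1) := by
  classical
  set d := k * p with hd
  set G : ℕ → ℂ → ℂ := fun j z => z ^ (j - 1) * ((1 - z)⁻¹) ^ (j + 1) with hGdef
  set H : ℕ → ℂ → ℂ := fun m z => ∑ j ∈ Finset.range (m + 1), (ccc m j : ℂ) * G j z with hHdef
  set F : ℂ → ℂ := fun z => ∑ g : Fin k → Fin (p + 1),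
      (∏ i, a (g i)) * H (∑ i, ((g i : ℕ))) z with hFdef
  have hwk : ∀ n : ℕ, w n ^ k
      = ∑ g : Fin k → Fin (p + 1), (∏ i, a (g i)) * ((n : ℂ) + 1) ^ (∑ i, ((g i : ℕ))) := by
    intro n
    rw [hw n]
    calc (∑ j : Fin (p + 1), a j * ((n : ℂ) + 1) ^ (j : ℕ)) ^ k
        = ∏ _i : Fin k, ∑ j : Fin (p + 1), a j * ((n : ℂ) + 1) ^ (j : ℕ) := by
          rw [Finset.prod_const]; simp
      _ = ∑ g ∈ Fintype.piFinset (fun _ : Fin k => (Finset.univ : Finset (Fin (p + 1)))),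
            ∏ i, a (g i) * ((n : ℂ) + 1) ^ ((g i : ℕ)) :=
          Finset.prod_univ_sum _ _
      _ = ∑ g : Fin k → Fin (p + 1), (∏ i, a (g i)) * ((n : ℂ) + 1) ^ (∑ i, ((g i : ℕ))) := by
          rw [Fintype.piFinset_univ]
          exact Finset.sum_congr rfl fun g _ => by
            rw [Finset.prod_mul_distrib, Finset.prod_pow_eq_pow_sum]
  have hFz : ∀ z : ℂ, ‖z‖ < 1 → HasSum (fun n : ℕ => w n ^ k * z ^ n) (F z) := by
    intro z hz
    have Hsum : HasSum (fun n : ℕ => ∑ g : Fin k → Fin (p + 1),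
        (∏ i, a (g i)) * (((n : ℂ) + 1) ^ (∑ i, ((g i : ℕ))) * z ^ n)) (F z) :=
      hasSum_sum fun g _ => (hasSum_pow_succ_mul (∑ i, ((g i : ℕ))) hz).mul_left _
    have heq : (fun n : ℕ => ∑ g : Fin k → Fin (p + 1),
        (∏ i, a (g i)) * (((n : ℂ) + 1) ^ (∑ i, ((g i : ℕ))) * z ^ n))
        = fun n : ℕ => w n ^ k * z ^ n := by
      funext n
      rw [hwk n, Finset.sum_mul]
      exact Finset.sum_congr rfl fun g _ => by ring
    exact heq ▸ Hsum
  refine ⟨fun z hz => (hFz z hz).summable, F, ?_, fun z hz => (hFz z hz).tsum_eq.symm, ?_⟩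
  · -- differentiability
    intro z hz
    have hz1 : z ≠ 1 := by
      intro h
      exact hz (by rw [h]; exact ⟨rfl, le_refl 1⟩)
    have hne : (1 : ℂ) - z ≠ 0 := sub_ne_zero.mpr (Ne.symm hz1)
    refine DifferentiableAt.differentiableWithinAt ?_
    apply DifferentiableAt.fun_sum
    intro g _
    apply DifferentiableAt.const_mul
    apply DifferentiableAt.fun_sum
    intro j _
    apply DifferentiableAt.const_mul
    exact (differentiableAt_pow _).mul
      ((((differentiableAt_const (1 : ℂ)).sub differentiableAt_id).inv hne).pow _)
  · -- ray bound
    intro θ hθ z hzRay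
    obtain ⟨ρ, hρ, rfl⟩ := hzRay
    set z : ℂ := (ρ : ℂ) * Complex.exp ((θ : ℂ) * Complex.I) with hzdef
    have hC0 : 0 < Cdir θ := Cdir_pos θ
    have hC1 : Cdir θ ≤ 1 := Cdir_le_one θ
    set M : ℝ := max 1 ρ with hMdef
    have hM1 : (1 : ℝ) ≤ M := le_max_left _ _
    have hρM : ρ ≤ M := le_max_right _ _
    have hM0 : 0 < M := lt_of_lt_of_le one_pos hM1
    have hNge : Cdir θ * M ≤ ‖(1 : ℂ) - z‖ := norm_one_sub_ray hθ hρ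
    have hNpos : (0 : ℝ) < ‖(1 : ℂ) - z‖ :=
      lt_of_lt_of_le (mul_pos hC0 hM0) hNge
    have hzn : ‖z‖ = ρ := by
      rw [hzdef, norm_mul, Complex.norm_exp_ofReal_mul_I,
        mul_one, Complex.norm_of_nonneg hρ.le]
    have hGb : ∀ j : ℕ, j ≤ d → ‖G j z‖ ≤ 1 / Cdir θ ^ (d + 1) := by
      intro j hj
      have habs : ‖G j z‖ = ρ ^ (j - 1) / ‖(1 : ℂ) - z‖ ^ (j + 1) := by
        rw [hGdef]
        simp only [norm_mul, norm_pow, norm_inv, hzn]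
        rw [div_eq_mul_inv, inv_pow]
      rw [habs, div_le_div_iff₀ (pow_pos hNpos _) (pow_pos hC0 _)]
      calc ρ ^ (j - 1) * Cdir θ ^ (d + 1)
          ≤ M ^ (j + 1) * Cdir θ ^ (j + 1) := by
            apply mul_le_mul _ (pow_le_pow_of_le_one hC0.le hC1 (by omega))
              (pow_nonneg hC0.le _) (pow_nonneg hM0.le _)
            exact le_trans (pow_le_pow_left₀ hρ.le hρM _) (pow_le_pow_right₀ hM1 (by omega))
        _ = (Cdir θ * M) ^ (j + 1) := by rw [← mul_pow]; ring
        _ ≤ ‖(1 : ℂ) - z‖ ^ (j + 1) := pow_le_pow_left₀ (mul_pos hC0 hM0).le hNge _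
        _ = 1 * ‖(1 : ℂ) - z‖ ^ (j + 1) := (one_mul _).symm
    have hHb : ∀ m : ℕ, m ≤ d →
        ‖H m z‖ ≤ (d.factorial : ℝ) ^ 2 * (1 / Cdir θ ^ (d + 1)) := by
      intro m hm
      have h1 : ‖H m z‖ ≤
          ∑ j ∈ Finset.range (m + 1), (ccc m j : ℝ) * (1 / Cdir θ ^ (d + 1)) := by
        rw [hHdef]
        refine le_trans (norm_sum_le _ _) (Finset.sum_le_sum fun j hj => ?_)
        rw [norm_mul, Complex.norm_natCast]
        have hjm : j ≤ m := by have := Finset.mem_range.mp hj; omega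
        exact mul_le_mul_of_nonneg_left (hGb j (hjm.trans hm)) (Nat.cast_nonneg _)
      refine le_trans h1 ?_
      rw [← Finset.sum_mul]
      apply mul_le_mul_of_nonneg_right _ (by positivity)
      have h2 : (∑ j ∈ Finset.range (m + 1), (ccc m j : ℝ)) ≤ (m.factorial : ℝ) ^ 2 := by
        exact_mod_cast ccc_sum_le m
      refine le_trans h2 ?_
      have h3 : (m.factorial : ℝ) ≤ (d.factorial : ℝ) := by
        exact_mod_cast Nat.factorial_le hm
      exact pow_le_pow_left₀ (Nat.cast_nonneg _) h3 2
    have hegle : ∀ g : Fin k → Fin (p + 1), (∑ i, ((g i : ℕ))) ≤ d := by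
      intro g
      calc (∑ i, ((g i : ℕ))) ≤ ∑ _i : Fin k, p :=
            Finset.sum_le_sum fun i _ => Fin.is_le (g i)
        _ = k * p := by simp [Finset.sum_const, mul_comm]
    have hAsum : (∑ g : Fin k → Fin (p + 1), ∏ i, ‖a (g i)‖) = A ^ k := by
      rw [hA]
      calc (∑ g : Fin k → Fin (p + 1), ∏ i, ‖a (g i)‖)
          = ∑ g ∈ Fintype.piFinset (fun _ : Fin k => (Finset.univ : Finset (Fin (p + 1)))),
              ∏ i, ‖a (g i)‖ := by rw [Fintype.piFinset_univ]
        _ = ∏ _i : Fin k, ∑ j : Fin (p + 1), ‖a j‖ :=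
            (Finset.prod_univ_sum (fun _ : Fin k => (Finset.univ : Finset (Fin (p + 1))))
              (fun _ j => ‖a j‖)).symm
        _ = (∑ j : Fin (p + 1), ‖a j‖) ^ k := by
            rw [Finset.prod_const]; simp
    calc ‖F z‖
        ≤ ∑ g : Fin k → Fin (p + 1),
            (∏ i, ‖a (g i)‖) * ((d.factorial : ℝ) ^ 2 * (1 / Cdir θ ^ (d + 1))) := by
          rw [hFdef]
          refine le_trans (norm_sum_le _ _) (Finset.sum_le_sum fun g _ => ?_)
          rw [norm_mul]
          have : ‖∏ i, a (g i)‖ = ∏ i, ‖a (g i)‖ := by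
            rw [norm_prod]
          rw [this]
          exact mul_le_mul_of_nonneg_left (hHb _ (hegle g))
            (Finset.prod_nonneg fun i _ => norm_nonneg _)
      _ = A ^ k * ((d.factorial : ℝ) ^ 2 * (1 / Cdir θ ^ (d + 1))) := by
          rw [← Finset.sum_mul, hAsum]
      _ = A ^ k * ((k * p).factorial : ℝ) ^ 2 / Cdir θ ^ (k * p + 1) := by
          rw [hd]; ring
end
end

section
/- Let r > 0, let u : ℕ → ℂ, and suppose the power series f(z) = Σ_{n≥0} u(n)·zⁿ converges on the disc D_r and its sum extends to a holomorphic function on ℂ \ [r,∞) such that for every θ ≢ 0 (mod 2π) there is a nondecreasing function p_θ : [0,∞) → [0,∞) with |f(z)| ≤ p_θ(|z|) for all z ∈ L_θ. Then for every a ∈ ℂ with Re(a) > 1, the power series g(z) = Σ_{n≥0} (u(n)/(n+a))·zⁿ converges on D_r, its sum extends to a holomorphic function on ℂ \ [r,∞), and for every θ ≢ 0 (mod 2π) one has |g(z)| ≤ p_θ(|z|) for all z ∈ L_θ. -/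
open Complex MeasureTheory

noncomputable section

private lemma slit_isClosed (c : ℝ) : IsClosed (SlitGe c) := by
  have h : SlitGe c = (Complex.im ⁻¹' {0}) ∩ (Complex.re ⁻¹' Set.Ici c) := by
    ext z; simp [SlitGe, Set.mem_setOf_eq]
  rw [h]
  exact (isClosed_singleton.preimage Complex.continuous_im).inter
    (isClosed_Ici.preimage Complex.continuous_re)

private lemma smul_mem_slitc {r : ℝ} (hr : 0 < r) {z : ℂ} (hz : z ∈ (SlitGe r)ᶜ)
    {t : ℝ} (ht0 : 0 ≤ t) (ht1 : t ≤ 1) : (t : ℂ) * z ∈ (SlitGe r)ᶜ := by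
  intro hmem
  obtain ⟨him, hre⟩ := hmem
  simp only [Complex.mul_im, Complex.mul_re, Complex.ofReal_re, Complex.ofReal_im,
    zero_mul, add_zero, mul_zero, sub_zero] at him hre
  rcases eq_or_lt_of_le ht0 with h0 | h0
  · rw [← h0] at hre; simp at hre; linarith
  · apply hz
    have hzim : z.im = 0 := by
      rcases mul_eq_zero.mp him with h | h
      · exact absurd h (ne_of_gt h0)
      · exact h
    have hzre : 0 < z.re := by nlinarith
    refine ⟨hzim, ?_⟩
    nlinarith

private lemma ball_subset_slitc {r : ℝ} : Metric.ball (0:ℂ) r ⊆ (SlitGe r)ᶜ := by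
  intro z hz hmem
  obtain ⟨him, hre⟩ := hmem
  rw [Metric.mem_ball, dist_zero_right] at hz
  have h1 : r ≤ ‖z‖ :=
    le_trans hre (le_trans (le_abs_self _) (Complex.abs_re_le_norm z))
  linarith

private lemma ray_subset_slitc {r θ : ℝ} (hr : 0 < r) (hθ : NonzeroDir θ) :
    Ray θ ⊆ (SlitGe r)ᶜ := by
  rintro z ⟨ρ, hρ, rfl⟩ ⟨him, hre⟩
  simp only [Complex.mul_im, Complex.mul_re, Complex.ofReal_re, Complex.ofReal_im,
    Complex.exp_ofReal_mul_I_im, Complex.exp_ofReal_mul_I_re,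
    zero_mul, add_zero, mul_zero, sub_zero] at him hre
  have hsin : Real.sin θ = 0 := by
    rcases mul_eq_zero.mp him with h | h
    · exact absurd h (ne_of_gt hρ)
    · exact h
  have hcos : 0 < Real.cos θ := by nlinarith
  obtain ⟨n, hn⟩ := Real.sin_eq_zero_iff.mp hsin
  rcases Int.even_or_odd n with ⟨j, hj⟩ | ⟨j, hj⟩
  · exact hθ ⟨j, by rw [← hn, hj]; push_cast; ring⟩
  · have : θ = Real.pi + (j : ℝ) * (2 * Real.pi) := by rw [← hn, hj]; push_cast; ring
    rw [this, Real.cos_add_int_mul_two_pi, Real.cos_pi] at hcos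
    linarith

private lemma integrand_integrable {r : ℝ} (hr : 0 < r) {F : ℂ → ℂ}
    (hFc : ContinuousOn F (SlitGe r)ᶜ) {a : ℂ} (ha : 1 < a.re) {z : ℂ}
    (hz : z ∈ (SlitGe r)ᶜ) :
    IntegrableOn (fun t : ℝ => (t : ℂ) ^ (a - 1) * F ((t : ℂ) * z)) (Set.Ioc 0 1) := by
  have hc : ContinuousOn (fun t : ℝ => (t : ℂ) ^ (a - 1) * F ((t : ℂ) * z))
      (Set.Ioc (0:ℝ) 1) := by
    apply ContinuousOn.mul
    · intro t ht
      exact (Complex.continuousAt_ofReal_cpow_const t (a - 1) (Or.inr ht.1.ne')).continuousWithinAt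
    · apply hFc.comp ((Complex.continuous_ofReal.mul continuous_const).continuousOn)
      intro t ht
      exact smul_mem_slitc hr hz ht.1.le ht.2
  have hK : IsCompact ((fun t : ℝ => (t : ℂ) * z) '' Set.Icc 0 1) :=
    isCompact_Icc.image (Complex.continuous_ofReal.mul continuous_const)
  have hKS : ((fun t : ℝ => (t : ℂ) * z) '' Set.Icc 0 1) ⊆ (SlitGe r)ᶜ := by
    rintro w ⟨t, ht, rfl⟩
    exact smul_mem_slitc hr hz ht.1 ht.2
  obtain ⟨M, hM⟩ := hK.exists_bound_of_continuousOn (hFc.mono hKS)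
  apply Integrable.mono' (g := fun _ : ℝ => max M 0)
    (integrableOn_const measure_Ioc_lt_top.ne)
    (hc.aestronglyMeasurable measurableSet_Ioc)
  filter_upwards [ae_restrict_mem measurableSet_Ioc] with t ht
  have h1 : ‖(t : ℂ) ^ (a - 1)‖ ≤ 1 := by
    rw [Complex.norm_cpow_eq_rpow_re_of_pos ht.1]
    exact Real.rpow_le_one ht.1.le ht.2 (by simp [Complex.sub_re]; linarith)
  have h2 : ‖F ((t : ℂ) * z)‖ ≤ max M 0 := by
    exact le_trans (hM _ ⟨t, ⟨ht.1.le, ht.2⟩, rfl⟩) (le_max_left _ _)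
  calc ‖(t : ℂ) ^ (a - 1) * F ((t : ℂ) * z)‖ = ‖(t : ℂ) ^ (a - 1)‖ * ‖F ((t : ℂ) * z)‖ :=
        norm_mul _ _
    _ ≤ 1 * max M 0 := mul_le_mul h1 h2 (norm_nonneg _) zero_le_one
    _ = max M 0 := one_mul _

/-- Lemma 2 of the paper: If `f(z) = Σ u(n) zⁿ` converges on `D_r`, extends
holomorphically to `ℂ \ [r,∞)` with `|f(z)| ≤ p_θ(|z|)` on each ray `L_θ` (`θ ≢ 0 (mod 2π)`)
for a nondecreasing `p_θ : [0,∞) → [0,∞)`, then for every `a ∈ ℂ` with `Re a > 1` the series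
`g(z) = Σ (u(n)/(n+a)) zⁿ` converges on `D_r`, extends holomorphically to `ℂ \ [r,∞)`, and
satisfies `|g(z)| ≤ p_θ(|z|)` on each such ray. -/
theorem division_by_n_add_a_preserves_ray_bound
    (r : ℝ) (hr : 0 < r) (u : ℕ → ℂ) (F : ℂ → ℂ) (P : ℝ → ℝ → ℝ)
    (hconv : ∀ z : ℂ, ‖z‖ < r → Summable (fun n : ℕ => u n * z ^ n))
    (hF : DifferentiableOn ℂ F (SlitGe r)ᶜ)
    (hFeq : ∀ z : ℂ, ‖z‖ < r → F z = ∑' n : ℕ, u n * z ^ n)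
    (hPmono : ∀ θ : ℝ, NonzeroDir θ → MonotoneOn (P θ) (Set.Ici 0))
    (hPnn : ∀ θ : ℝ, NonzeroDir θ → ∀ x : ℝ, 0 ≤ x → 0 ≤ P θ x)
    (hFbound : ∀ θ : ℝ, NonzeroDir θ → ∀ z ∈ Ray θ, ‖F z‖ ≤ P θ ‖z‖)
    (a : ℂ) (ha : 1 < a.re) :
    (∀ z : ℂ, ‖z‖ < r → Summable (fun n : ℕ => u n / ((n : ℂ) + a) * z ^ n)) ∧
    ∃ G : ℂ → ℂ, DifferentiableOn ℂ G (SlitGe r)ᶜ ∧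
      (∀ z : ℂ, ‖z‖ < r → G z = ∑' n : ℕ, u n / ((n : ℂ) + a) * z ^ n) ∧
      ∀ θ : ℝ, NonzeroDir θ → ∀ z ∈ Ray θ, ‖G z‖ ≤ P θ ‖z‖ := by
  have hSopen : IsOpen (SlitGe r)ᶜ := (slit_isClosed r).isOpen_compl
  have hnorm_sum : ∀ z : ℂ, ‖z‖ < r → Summable (fun n : ℕ => ‖u n‖ * ‖z‖ ^ n) := by
    intro z hz
    have h1 : Summable (fun n : ℕ => u n * ((‖z‖ : ℝ) : ℂ) ^ n) := by
      apply hconv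
      simpa using hz
    have h2 := summable_norm_iff.mpr h1
    simpa [norm_mul, norm_pow, Complex.norm_real, _root_.abs_of_nonneg (norm_nonneg z)] using h2
  have hna_one : ∀ n : ℕ, (1 : ℝ) ≤ ‖(n : ℂ) + a‖ := by
    intro n
    have h1 : (1 : ℝ) ≤ ((n : ℂ) + a).re := by
      simp only [Complex.add_re, Complex.natCast_re]
      have : (0:ℝ) ≤ (n : ℝ) := Nat.cast_nonneg n
      linarith
    exact le_trans h1 (Complex.re_le_norm _)
  have hna_ne : ∀ n : ℕ, (n : ℂ) + a ≠ 0 := by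
    intro n h
    have := hna_one n
    rw [h] at this
    simp at this
    linarith
  have hsum : ∀ z : ℂ, ‖z‖ < r → Summable (fun n : ℕ => u n / ((n : ℂ) + a) * z ^ n) := by
    intro z hz
    apply Summable.of_norm_bounded (hnorm_sum z hz)
    intro n
    rw [norm_mul, norm_div, norm_pow]
    apply mul_le_mul_of_nonneg_right _ (pow_nonneg (norm_nonneg z) n)
    exact div_le_self (norm_nonneg _) (hna_one n)
  set G : ℂ → ℂ := fun z => ∫ t in Set.Ioc (0:ℝ) 1, (t : ℂ) ^ (a - 1) * F ((t : ℂ) * z)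
    with hGdef
  refine ⟨hsum, G, ?_, ?_, ?_⟩
  · -- differentiability
    intro z₀ hz₀
    have hK₀c : IsCompact ((fun t : ℝ => (t : ℂ) * z₀) '' Set.Icc 0 1) :=
      isCompact_Icc.image (Complex.continuous_ofReal.mul continuous_const)
    have hK₀S : ((fun t : ℝ => (t : ℂ) * z₀) '' Set.Icc 0 1) ⊆ (SlitGe r)ᶜ := by
      rintro w ⟨t, ht, rfl⟩
      exact smul_mem_slitc hr hz₀ ht.1 ht.2
    obtain ⟨δ, hδ, hδS⟩ := hK₀c.exists_cthickening_subset_open hSopen hK₀S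
    have hKc : IsCompact (Metric.cthickening δ ((fun t : ℝ => (t : ℂ) * z₀) '' Set.Icc 0 1)) :=
      hK₀c.cthickening
    have hmem : ∀ x ∈ Metric.ball z₀ δ, ∀ t ∈ Set.Icc (0:ℝ) 1,
        (t : ℂ) * x ∈ Metric.cthickening δ ((fun t : ℝ => (t : ℂ) * z₀) '' Set.Icc 0 1) := by
      intro x hx t ht
      have hy : (t : ℂ) * z₀ ∈ (fun s : ℝ => (s : ℂ) * z₀) '' Set.Icc 0 1 := ⟨t, ht, rfl⟩
      refine Metric.mem_cthickening_of_dist_le _ _ δ _ hy ?_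
      rw [dist_eq_norm, ← mul_sub, norm_mul, Complex.norm_real, Real.norm_eq_abs,
        _root_.abs_of_nonneg ht.1]
      have hxz : ‖x - z₀‖ ≤ δ := le_of_lt (by rwa [Metric.mem_ball, dist_eq_norm] at hx)
      nlinarith [norm_nonneg (x - z₀), ht.1, ht.2]
    have hmemS : ∀ x ∈ Metric.ball z₀ δ, ∀ t ∈ Set.Icc (0:ℝ) 1,
        (t : ℂ) * x ∈ (SlitGe r)ᶜ := fun x hx t ht => hδS (hmem x hx t ht)
    have hAn : AnalyticOnNhd ℂ F (SlitGe r)ᶜ := hF.analyticOnNhd hSopen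
    have hdF : ContinuousOn (deriv F) (SlitGe r)ᶜ := hAn.deriv.continuousOn
    obtain ⟨M, hM⟩ := hKc.exists_bound_of_continuousOn (hdF.mono hδS)
    have key := hasDerivAt_integral_of_dominated_loc_of_deriv_le
      (F := fun x (t : ℝ) => (t : ℂ) ^ (a - 1) * F ((t : ℂ) * x))
      (F' := fun x (t : ℝ) => (t : ℂ) ^ (a - 1) * (deriv F ((t : ℂ) * x) * (t : ℂ)))
      (x₀ := z₀) (bound := fun _ : ℝ => max M 0)
      (μ := MeasureTheory.volume.restrict (Set.Ioc (0:ℝ) 1)) (Metric.ball_mem_nhds z₀ hδ)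
      ?_ ?_ ?_ ?_ ?_ ?_
    · exact key.2.differentiableAt.differentiableWithinAt
    · -- hF_meas
      filter_upwards [Metric.ball_mem_nhds z₀ hδ] with x hx
      apply ContinuousOn.aestronglyMeasurable _ measurableSet_Ioc
      apply ContinuousOn.mul
      · intro t ht
        exact (Complex.continuousAt_ofReal_cpow_const t (a - 1)
          (Or.inr ht.1.ne')).continuousWithinAt
      · apply hF.continuousOn.comp ((Complex.continuous_ofReal.mul continuous_const).continuousOn)
        intro t ht
        exact hmemS x hx t ⟨ht.1.le, ht.2⟩
    · exact integrand_integrable hr hF.continuousOn ha hz₀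
    · -- hF'_meas
      apply ContinuousOn.aestronglyMeasurable _ measurableSet_Ioc
      apply ContinuousOn.mul
      · intro t ht
        exact (Complex.continuousAt_ofReal_cpow_const t (a - 1)
          (Or.inr ht.1.ne')).continuousWithinAt
      · apply ContinuousOn.mul
        · apply hdF.comp ((Complex.continuous_ofReal.mul continuous_const).continuousOn)
          intro t ht
          exact smul_mem_slitc hr hz₀ ht.1.le ht.2
        · exact Complex.continuous_ofReal.continuousOn
    · -- h_bound
      filter_upwards [ae_restrict_mem measurableSet_Ioc] with t ht x hx
      have h1 : ‖(t : ℂ) ^ (a - 1)‖ ≤ 1 := by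
        rw [Complex.norm_cpow_eq_rpow_re_of_pos ht.1]
        exact Real.rpow_le_one ht.1.le ht.2 (by simp [Complex.sub_re]; linarith)
      have h2 : ‖deriv F ((t : ℂ) * x)‖ ≤ max M 0 := by
        exact le_trans (hM _ (hmem x hx t ⟨ht.1.le, ht.2⟩)) (le_max_left _ _)
      have h3 : ‖(t : ℂ)‖ ≤ 1 := by
        rw [Complex.norm_real, Real.norm_eq_abs, _root_.abs_of_nonneg ht.1.le]; exact ht.2
      calc ‖(t : ℂ) ^ (a - 1) * (deriv F ((t : ℂ) * x) * (t : ℂ))‖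
          = ‖(t : ℂ) ^ (a - 1)‖ * (‖deriv F ((t : ℂ) * x)‖ * ‖(t : ℂ)‖) := by
            rw [norm_mul, norm_mul]
        _ ≤ 1 * (max M 0 * 1) := by
            apply mul_le_mul h1 _ (mul_nonneg (norm_nonneg _) (norm_nonneg _)) zero_le_one
            exact mul_le_mul h2 h3 (norm_nonneg _) (le_max_right _ _)
        _ = max M 0 := by ring
    · exact integrableOn_const measure_Ioc_lt_top.ne
    · -- h_diff
      filter_upwards [ae_restrict_mem measurableSet_Ioc] with t ht x hx
      have hxS : (t : ℂ) * x ∈ (SlitGe r)ᶜ := hmemS x hx t ⟨ht.1.le, ht.2⟩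
      have hdFx : HasDerivAt F (deriv F ((t : ℂ) * x)) ((t : ℂ) * x) :=
        (hF.differentiableAt (hSopen.mem_nhds hxS)).hasDerivAt
      have h1 : HasDerivAt (fun y : ℂ => (t : ℂ) * y) (t : ℂ) x := by
        simpa using (hasDerivAt_id x).const_mul (t : ℂ)
      exact (hdFx.comp x h1).const_mul ((t : ℂ) ^ (a - 1))
  · -- series identity
    intro z hz
    have hzS : z ∈ (SlitGe r)ᶜ := ball_subset_slitc (by simpa [Metric.mem_ball] using hz)
    have hcongr : ∀ n : ℕ, ∀ t ∈ Set.Ioc (0:ℝ) 1,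
        (t : ℂ) ^ (a - 1) * (u n * ((t : ℂ) * z) ^ n)
          = u n * z ^ n * (t : ℂ) ^ ((n : ℂ) + a - 1) := by
      intro n t ht
      have ht0 : (t : ℂ) ≠ 0 := by exact_mod_cast ht.1.ne'
      have he : (n : ℂ) + a - 1 = (n : ℂ) + (a - 1) := by ring
      rw [he, Complex.cpow_add _ _ ht0, Complex.cpow_natCast, mul_pow]
      ring
    have hre : ∀ n : ℕ, (-1 : ℝ) < ((n : ℂ) + a - 1).re := by
      intro n
      simp only [Complex.sub_re, Complex.add_re, Complex.natCast_re, Complex.one_re]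
      have : (0:ℝ) ≤ (n : ℝ) := Nat.cast_nonneg n
      linarith
    have hint : ∀ n : ℕ, IntegrableOn
        (fun t : ℝ => (t : ℂ) ^ (a - 1) * (u n * ((t : ℂ) * z) ^ n)) (Set.Ioc 0 1) := by
      intro n
      apply IntegrableOn.congr_fun _ (fun t ht => (hcongr n t ht).symm) measurableSet_Ioc
      have h1 : IntervalIntegrable (fun t : ℝ => (t : ℂ) ^ ((n : ℂ) + a - 1))
          MeasureTheory.volume 0 1 := intervalIntegral.intervalIntegrable_cpow' (hre n)
      have h2 := (intervalIntegrable_iff_integrableOn_Ioc_of_le zero_le_one).mp h1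
      exact (h2.const_mul (u n * z ^ n) : )
    have hval : ∀ n : ℕ, (∫ t in Set.Ioc (0:ℝ) 1, (t : ℂ) ^ (a - 1) * (u n * ((t : ℂ) * z) ^ n))
        = u n / ((n : ℂ) + a) * z ^ n := by
      intro n
      rw [setIntegral_congr_fun measurableSet_Ioc (hcongr n)]
      rw [MeasureTheory.integral_const_mul]
      rw [← intervalIntegral.integral_of_le zero_le_one,
        integral_cpow (Or.inl (hre n))]
      have he : (n : ℂ) + a - 1 + 1 = (n : ℂ) + a := by ring
      rw [he, Complex.ofReal_one, Complex.ofReal_zero, Complex.one_cpow,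
        Complex.zero_cpow (hna_ne n), sub_zero, mul_one_div, div_mul_eq_mul_div]
    have hsumnorm : Summable (fun n : ℕ =>
        ∫ t in Set.Ioc (0:ℝ) 1, ‖(t : ℂ) ^ (a - 1) * (u n * ((t : ℂ) * z) ^ n)‖) := by
      apply Summable.of_nonneg_of_le
        (fun n => MeasureTheory.integral_nonneg fun t => norm_nonneg _)
        _ (hnorm_sum z hz)
      intro n
      have hle : ∀ t ∈ Set.Ioc (0:ℝ) 1,
          ‖(t : ℂ) ^ (a - 1) * (u n * ((t : ℂ) * z) ^ n)‖ ≤ ‖u n‖ * ‖z‖ ^ n := by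
        intro t ht
        have h1 : ‖(t : ℂ) ^ (a - 1)‖ ≤ 1 := by
          rw [Complex.norm_cpow_eq_rpow_re_of_pos ht.1]
          exact Real.rpow_le_one ht.1.le ht.2 (by simp [Complex.sub_re]; linarith)
        have h2 : ‖u n * ((t : ℂ) * z) ^ n‖ ≤ ‖u n‖ * ‖z‖ ^ n := by
          rw [norm_mul, norm_pow, norm_mul, Complex.norm_real, Real.norm_eq_abs,
            _root_.abs_of_nonneg ht.1.le]
          apply mul_le_mul_of_nonneg_left _ (norm_nonneg _)
          apply pow_le_pow_left₀ (mul_nonneg ht.1.le (norm_nonneg z))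
          nlinarith [norm_nonneg z, ht.1, ht.2]
        calc ‖(t : ℂ) ^ (a - 1) * (u n * ((t : ℂ) * z) ^ n)‖
            = ‖(t : ℂ) ^ (a - 1)‖ * ‖u n * ((t : ℂ) * z) ^ n‖ := norm_mul _ _
          _ ≤ 1 * (‖u n‖ * ‖z‖ ^ n) :=
              mul_le_mul h1 h2 (norm_nonneg _) zero_le_one
          _ = ‖u n‖ * ‖z‖ ^ n := one_mul _
      calc (∫ t in Set.Ioc (0:ℝ) 1, ‖(t : ℂ) ^ (a - 1) * (u n * ((t : ℂ) * z) ^ n)‖)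
          ≤ ∫ _ in Set.Ioc (0:ℝ) 1, ‖u n‖ * ‖z‖ ^ n := by
            apply setIntegral_mono_on (hint n).norm
              (integrableOn_const measure_Ioc_lt_top.ne) measurableSet_Ioc hle
        _ = ‖u n‖ * ‖z‖ ^ n := by
            rw [MeasureTheory.setIntegral_const, Real.volume_real_Ioc_of_le zero_le_one]
            simp
    have hswap := MeasureTheory.integral_tsum_of_summable_integral_norm hint hsumnorm
    have hGz : G z = ∫ t in Set.Ioc (0:ℝ) 1,
        ∑' n : ℕ, (t : ℂ) ^ (a - 1) * (u n * ((t : ℂ) * z) ^ n) := by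
      apply setIntegral_congr_fun measurableSet_Ioc
      intro t ht
      show (t : ℂ) ^ (a - 1) * F ((t : ℂ) * z)
        = ∑' n : ℕ, (t : ℂ) ^ (a - 1) * (u n * ((t : ℂ) * z) ^ n)
      have htz : ‖(t : ℂ) * z‖ < r := by
        rw [norm_mul, Complex.norm_real, Real.norm_eq_abs, _root_.abs_of_nonneg ht.1.le]
        calc t * ‖z‖ ≤ 1 * ‖z‖ := mul_le_mul_of_nonneg_right ht.2 (norm_nonneg z)
          _ = ‖z‖ := one_mul _
          _ < r := hz
      rw [hFeq _ htz, tsum_mul_left]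
    rw [hGz, ← hswap]
    exact tsum_congr fun n => hval n
  · -- ray bound
    intro θ hθ z hzray
    have hzS : z ∈ (SlitGe r)ᶜ := ray_subset_slitc hr hθ hzray
    obtain ⟨ρ, hρ, hzdef⟩ := hzray
    have hPz : 0 ≤ P θ ‖z‖ := hPnn θ hθ _ (norm_nonneg z)
    have hbnd : ∀ᵐ (t : ℝ) ∂(MeasureTheory.volume.restrict (Set.Ioc (0:ℝ) 1)),
        ‖(t : ℂ) ^ (a - 1) * F ((t : ℂ) * z)‖ ≤ t ^ (a.re - 1) * P θ ‖z‖ := by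
      filter_upwards [ae_restrict_mem measurableSet_Ioc] with t ht
      have htzray : (t : ℂ) * z ∈ Ray θ := by
        refine ⟨t * ρ, mul_pos ht.1 hρ, ?_⟩
        rw [hzdef]; push_cast; ring
      have hnorm : ‖(t : ℂ) * z‖ = t * ‖z‖ := by
        rw [norm_mul, Complex.norm_real, Real.norm_eq_abs, _root_.abs_of_nonneg ht.1.le]
      have htz_le : ‖(t : ℂ) * z‖ ≤ ‖z‖ := by
        rw [hnorm]
        nlinarith [norm_nonneg z, ht.1, ht.2]
      have h2 : ‖F ((t : ℂ) * z)‖ ≤ P θ ‖z‖ := by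
        refine le_trans (hFbound θ hθ _ htzray) ?_
        exact hPmono θ hθ (Set.mem_Ici.mpr (norm_nonneg _)) (Set.mem_Ici.mpr (norm_nonneg _))
          htz_le
      rw [norm_mul,
        Complex.norm_cpow_eq_rpow_re_of_pos ht.1]
      have hexp : (a - 1).re = a.re - 1 := by simp [Complex.sub_re]
      rw [hexp]
      exact mul_le_mul_of_nonneg_left h2 (Real.rpow_nonneg ht.1.le _)
    have hgint : IntegrableOn (fun t : ℝ => t ^ (a.re - 1) * P θ ‖z‖) (Set.Ioc 0 1) := by
      have h1 : IntervalIntegrable (fun t : ℝ => t ^ (a.re - 1))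
          MeasureTheory.volume 0 1 := intervalIntegral.intervalIntegrable_rpow' (by linarith)
      exact ((intervalIntegrable_iff_integrableOn_Ioc_of_le zero_le_one).mp h1).mul_const _
    calc ‖G z‖ ≤ ∫ t in Set.Ioc (0:ℝ) 1, t ^ (a.re - 1) * P θ ‖z‖ :=
          MeasureTheory.norm_integral_le_of_norm_le hgint hbnd
      _ = (∫ t in Set.Ioc (0:ℝ) 1, t ^ (a.re - 1)) * P θ ‖z‖ :=
          MeasureTheory.integral_mul_const _ _
      _ = (1 / a.re) * P θ ‖z‖ := by
          rw [← intervalIntegral.integral_of_le zero_le_one,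
            integral_rpow (Or.inl (by linarith))]
          have hre1 : a.re - 1 + 1 = a.re := by ring
          rw [hre1, Real.one_rpow, Real.zero_rpow (by linarith), sub_zero]
      _ ≤ P θ ‖z‖ := by
          apply mul_le_of_le_one_left hPz
          rw [div_le_one (by linarith)]
          linarith
end
end
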